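/- arXiv:1307.8055 — 6 statements merged into one kernel-verified Lean document; each statement's English description precedes it below -/
import Mathlib

section
/- Let α be irrational with bounded partial quotients. Then there exist positive constants C₁, C₂ such that for every k ∈ ℕ, every interval arising from the partition of the circle 𝕋 = ℝ/ℤ by the points 0, −α, −2α, …, −(k−1)α has length at least C₂/k and less than C₁/k. -/
/-!
The gap at the orbit point `-jα` towards `-iα` is `fract ((j - i) α)`, at least `B / |j - i| > B / k`
by the Diophantine hypothesis, which gives the lower bound. For the upper bound, one of `j` and
`k - 1 - j` is some `n ≥ (k - 1) / 2`, and it suffices to find `1 ≤ m ≤ n` with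
`fract (m α) ≤ 1 / (B (n + 1))` (or the same for `-α`). Dirichlet's theorem gives this for one of
the two signs. For the other sign, let `-rα` be the point closest to `0` from above among
`-α, …, -nα`: Dirichlet on `1, …, r - 1` produces `m ≤ n` with `fract (m α) ≤ 1 / r`, while
`B / r ≤ fract (-r α) ≤ 1 / (n + 1)` forces `r ≥ B (n + 1)`.
-/

open Finset Int

namespace Int

variable {R : Type*} [Ring R] [LinearOrder R] [IsOrderedRing R] [FloorRing R]

lemma fract_sub_eq_of_le {x y : R} (h : fract y ≤ fract x) :
    fract (x - y) = fract x - fract y :=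
  fract_eq_iff.2 ⟨sub_nonneg.2 h, (sub_le_self _ (fract_nonneg y)).trans_lt (fract_lt_one x),
    ⌊x⌋ - ⌊y⌋, by push_cast; rw [fract, fract]; abel⟩

lemma fract_fract_sub_fract (x y : R) : fract (fract x - fract y) = fract (x - y) :=
  fract_eq_fract.2 ⟨⌊y⌋ - ⌊x⌋, by push_cast; rw [fract, fract]; abel⟩

lemma fract_le_abs_sub_or_fract_neg_le_abs_sub (x : R) (z : ℤ) :
    fract x ≤ |x - z| ∨ fract (-x) ≤ |x - z| := by
  rcases le_total (z : R) x with hzx | hxz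
  · left
    have : (z : R) ≤ ⌊x⌋ := cast_le.2 (le_floor.2 hzx)
    rw [abs_of_nonneg (sub_nonneg.2 hzx), fract]
    exact sub_le_sub_left this x
  · right
    have : ((-z : ℤ) : R) ≤ ⌊-x⌋ := cast_le.2 (le_floor.2 (by push_cast; exact neg_le_neg hxz))
    rw [abs_of_nonpos (sub_nonpos.2 hxz), fract, neg_sub]
    push_cast at this
    calc -x - ⌊-x⌋ ≤ -x - -z := sub_le_sub_left this _
      _ = z - x := by abel

end Int

lemma exists_fract_le_or_fract_neg_le (ξ : ℝ) {n : ℕ} (hn : 0 < n) :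
    ∃ q ∈ Icc 1 n, fract (q * ξ) ≤ 1 / (n + 1) ∨ fract (-(q * ξ)) ≤ 1 / (n + 1) := by
  obtain ⟨q, hq, hqn, hdist⟩ := Real.exists_nat_abs_mul_sub_round_le ξ hn
  exact ⟨q, mem_Icc.2 ⟨hq, hqn⟩,
    (fract_le_abs_sub_or_fract_neg_le_abs_sub _ _).imp (·.trans hdist) (·.trans hdist)⟩

/-- An approximation `fract (-(q ξ)) ≤ 1 / r` with `q < r` yields `(r - q) ξ`, which is even
closer to `0` from above, by the minimality of `r`. -/
lemma exists_fract_mul_le_inv_of_forall_fract_neg_le (ξ : ℝ) {n r : ℕ} (hr : r ∈ Icc 1 n)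
    (hmin : ∀ m ∈ Icc 1 n, fract (-(r * ξ)) ≤ fract (-(m * ξ))) :
    ∃ m ∈ Icc 1 n, fract (m * ξ) ≤ 1 / r := by
  rw [mem_Icc] at hr
  obtain rfl | hr2 : r = 1 ∨ 2 ≤ r := by omega
  · exact ⟨1, mem_Icc.2 ⟨le_rfl, hr.2⟩, by simpa using (fract_lt_one _).le⟩
  obtain ⟨q, hq, hclose⟩ := exists_fract_le_or_fract_neg_le ξ (n := r - 1) (by omega)
  rw [mem_Icc] at hq
  rw [Nat.cast_sub (by omega), Nat.cast_one, sub_add_cancel] at hclose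
  rcases hclose with hpos | hneg
  · exact ⟨q, mem_Icc.2 ⟨hq.1, by omega⟩, hpos⟩
  refine ⟨r - q, mem_Icc.2 ⟨by omega, by omega⟩, ?_⟩
  have hdiff : ((r - q : ℕ) : ℝ) * ξ = -(q * ξ) - -(r * ξ) := by
    rw [Nat.cast_sub (by omega)]; ring
  rw [hdiff, fract_sub_eq_of_le (hmin q (mem_Icc.2 ⟨hq.1, by omega⟩))]
  linarith [fract_nonneg (-(r * ξ))]

/-- As `m` ranges over both signs, this is `‖m ξ‖ ≥ B / |m|` for the distance to the nearest
integer. -/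
def BadlyApproximableWith (B ξ : ℝ) : Prop :=
  0 < B ∧ ∀ m : ℤ, m ≠ 0 → B / |(m : ℝ)| ≤ fract (m * ξ)

lemma BadlyApproximableWith.of_le_abs_sub_div {B ξ : ℝ} (hB : 0 < B)
    (h : ∀ (p : ℤ) (n : ℕ), 0 < n → B / (n : ℝ) ^ 2 ≤ |ξ - (p : ℝ) / (n : ℝ)|) :
    BadlyApproximableWith B ξ := by
  have hnat : ∀ (p : ℤ) (n : ℕ), 0 < n → B / n ≤ |n * ξ - p| := by
    intro p n hn
    have hn' : (0 : ℝ) < n := by exact_mod_cast hn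
    calc B / n = n * (B / n ^ 2) := by field_simp
      _ ≤ n * |ξ - p / n| := by gcongr; exact h p n hn
      _ = |n * ξ - p| := by
        rw [← abs_of_pos hn', ← abs_mul, abs_of_pos hn']; congr 1; field_simp
  refine ⟨hB, fun m hm => ?_⟩
  obtain ⟨n, rfl | rfl⟩ := Int.eq_nat_or_neg m
  · have hn : 0 < n := by omega
    have := hnat ⌊(n : ℝ) * ξ⌋ n hn
    rw [Int.self_sub_floor, abs_of_nonneg (fract_nonneg _)] at this
    simpa using this
  · have hn : 0 < n := by omega
    have := hnat (-⌊-((n : ℝ) * ξ)⌋) n hn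
    rw [Int.cast_neg, sub_neg_eq_add, ← abs_neg, neg_add', Int.self_sub_floor,
      abs_of_nonneg (fract_nonneg _)] at this
    rwa [Int.cast_neg, Int.cast_natCast, abs_neg, Nat.abs_cast, neg_mul]

namespace BadlyApproximableWith

variable {B ξ : ℝ}

lemma neg (h : BadlyApproximableWith B ξ) : BadlyApproximableWith B (-ξ) :=
  ⟨h.1, fun m hm => by simpa using h.2 (-m) (neg_ne_zero.2 hm)⟩

lemma lt_one (h : BadlyApproximableWith B ξ) : B < 1 := by
  simpa using (h.2 1 one_ne_zero).trans_lt (fract_lt_one _)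

lemma exists_fract_mul_le (h : BadlyApproximableWith B ξ) {n : ℕ} (hn : 0 < n) :
    ∃ m ∈ Icc 1 n, fract (m * ξ) ≤ 1 / (B * (n + 1)) := by
  have hB := h.1
  have hne : (Icc 1 n).Nonempty := ⟨1, mem_Icc.2 ⟨le_rfl, hn⟩⟩
  obtain ⟨r, hr, hmin⟩ := (Icc 1 n).exists_min_image (fun m : ℕ => fract (-(m * ξ))) hne
  obtain ⟨q, hq, hclose⟩ := exists_fract_le_or_fract_neg_le ξ hn
  have hdir : 1 / ((n : ℝ) + 1) ≤ 1 / (B * (n + 1)) :=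
    one_div_le_one_div_of_le (by positivity) (by nlinarith [h.lt_one])
  rcases hclose with hpos | hneg
  · exact ⟨q, hq, hpos.trans hdir⟩
  obtain ⟨m, hm, hmr⟩ := exists_fract_mul_le_inv_of_forall_fract_neg_le ξ hr hmin
  refine ⟨m, hm, hmr.trans (one_div_le_one_div_of_le (by positivity) ?_)⟩
  have hr0 : (0 : ℝ) < r := by exact_mod_cast (mem_Icc.1 hr).1
  have hlow : B / r ≤ 1 / (n + 1) := by
    have := h.2 (-r) (by have := (mem_Icc.1 hr).1; omega)
    push_cast at this
    rw [abs_neg, abs_of_pos hr0, neg_mul] at this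
    exact this.trans ((hmin q hq).trans hneg)
  rw [div_le_div_iff₀ hr0 (by positivity)] at hlow
  linarith

end BadlyApproximableWith

noncomputable def circleGap (S : Finset ℝ) (a : ℝ) : ℝ :=
  sInf (insert 1 {d | ∃ b ∈ S, b ≠ a ∧ d = fract (b - a)})

section circleGap

variable {S : Finset ℝ} {a : ℝ}

lemma bddBelow_insert_one_fract_sub :
    BddBelow (insert 1 {d | ∃ b ∈ S, b ≠ a ∧ d = fract (b - a)}) :=
  ⟨0, by rintro _ (rfl | ⟨b, -, -, rfl⟩) <;> simp [fract_nonneg]⟩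

lemma circleGap_le_one : circleGap S a ≤ 1 :=
  csInf_le bddBelow_insert_one_fract_sub (Set.mem_insert _ _)

lemma circleGap_le_fract {b : ℝ} (hb : b ∈ S) (hba : b ≠ a) : circleGap S a ≤ fract (b - a) :=
  csInf_le bddBelow_insert_one_fract_sub (Set.mem_insert_of_mem _ ⟨b, hb, hba, rfl⟩)

lemma le_circleGap {c : ℝ} (hc : c ≤ 1) (h : ∀ b ∈ S, b ≠ a → c ≤ fract (b - a)) :
    c ≤ circleGap S a :=
  le_csInf (Set.insert_nonempty _ _) <| by
    rintro _ (rfl | ⟨b, hb, hba, rfl⟩)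
    exacts [hc, h b hb hba]

end circleGap

noncomputable def negOrbit (α : ℝ) (k : ℕ) : Finset ℝ :=
  (Finset.range k).image fun j : ℕ => fract (-(j : ℝ) * α)

lemma fract_sub_fract_neg_mul (α : ℝ) (i j : ℕ) :
    fract (fract (-(i : ℝ) * α) - fract (-(j : ℝ) * α)) = fract (((j - i : ℤ) : ℝ) * α) := by
  rw [fract_fract_sub_fract]; push_cast; ring_nf

namespace BadlyApproximableWith

variable {B α : ℝ} {k j : ℕ}

lemma div_le_circleGap_negOrbit (h : BadlyApproximableWith B α) (hj : j < k) :
    B / k ≤ circleGap (negOrbit α k) (fract (-(j : ℝ) * α)) := by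
  have hk : (1 : ℝ) ≤ k := by exact_mod_cast (show 1 ≤ k by omega)
  refine le_circleGap (div_le_one_of_le₀ (h.lt_one.le.trans hk) k.cast_nonneg) ?_
  intro b hb hba
  obtain ⟨i, hi, rfl⟩ := mem_image.1 hb
  rw [mem_range] at hi
  have hm : (j - i : ℤ) ≠ 0 := by
    rintro hm
    obtain rfl : i = j := by omega
    exact hba rfl
  have hmk : |((j - i : ℤ) : ℝ)| ≤ k := by
    rw [← Int.cast_abs]
    exact_mod_cast (abs_le.2 ⟨by omega, by omega⟩ : |(j - i : ℤ)| ≤ k)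
  rw [fract_sub_fract_neg_mul]
  calc B / k ≤ B / |((j - i : ℤ) : ℝ)| := by gcongr; exact h.1.le
    _ ≤ _ := h.2 _ hm

lemma circleGap_negOrbit_le (h : BadlyApproximableWith B α) {i : ℕ} (hi : i < k) (hij : i ≠ j) :
    circleGap (negOrbit α k) (fract (-(j : ℝ) * α)) ≤ fract (((j - i : ℤ) : ℝ) * α) := by
  have hm : (j - i : ℤ) ≠ 0 := by omega
  have hpos : 0 < fract (((j - i : ℤ) : ℝ) * α) :=
    (div_pos h.1 (abs_pos.2 (by exact_mod_cast hm))).trans_le (h.2 _ hm)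
  rw [← fract_sub_fract_neg_mul] at hpos ⊢
  refine circleGap_le_fract (mem_image_of_mem _ (mem_range.2 hi)) fun heq => ?_
  rw [heq, sub_self, fract_zero] at hpos
  exact hpos.false

lemma circleGap_negOrbit_lt (h : BadlyApproximableWith B α) (hj : j < k) :
    circleGap (negOrbit α k) (fract (-(j : ℝ) * α)) < 2 / (B * k) := by
  have hB := h.1
  obtain ⟨n, hnk, hgap⟩ : ∃ n : ℕ, k < 2 * (n + 1) ∧
      circleGap (negOrbit α k) (fract (-(j : ℝ) * α)) ≤ 1 / (B * (n + 1)) := by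
    by_cases hk : k = 1
    · refine ⟨0, by omega, ?_⟩
      rw [Nat.cast_zero, zero_add, mul_one, one_div]
      exact circleGap_le_one.trans (one_le_inv₀ hB |>.2 h.lt_one.le)
    by_cases hjk : k ≤ 2 * j + 1
    · obtain ⟨m, hm, hmj⟩ := h.exists_fract_mul_le (n := j) (by omega)
      rw [mem_Icc] at hm
      refine ⟨j, by omega, (h.circleGap_negOrbit_le (i := j - m) (by omega) (by omega)).trans ?_⟩
      rwa [show ((j - (j - m : ℕ) : ℤ) : ℝ) = m by push_cast [Nat.cast_sub hm.2]; ring]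
    · obtain ⟨m, hm, hmj⟩ := h.neg.exists_fract_mul_le (n := k - 1 - j) (by omega)
      rw [mem_Icc] at hm
      refine ⟨k - 1 - j, by omega,
        (h.circleGap_negOrbit_le (i := j + m) (by omega) (by omega)).trans ?_⟩
      rwa [show ((j - (j + m : ℕ) : ℤ) : ℝ) * α = m * -α by push_cast; ring]
  refine hgap.trans_lt ?_
  have hnk' : (k : ℝ) < 2 * (n + 1) := by exact_mod_cast hnk
  have hk : (0 : ℝ) < k := by exact_mod_cast (show 0 < k by omega)
  rw [div_lt_div_iff₀ (by positivity) (by positivity)]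
  nlinarith

end BadlyApproximableWith

theorem stmt3_general (α : ℝ)
    (hbpq : ∃ B : ℝ, 0 < B ∧ ∀ (p : ℤ) (n : ℕ), 0 < n →
      B / (n : ℝ) ^ 2 ≤ |α - (p : ℝ) / (n : ℝ)|) :
    ∃ C₁ C₂ : ℝ, 0 < C₁ ∧ 0 < C₂ ∧ ∀ k : ℕ, 0 < k →
      ∀ a ∈ (Finset.range k).image (fun j : ℕ => Int.fract (-(j : ℝ) * α)),
        C₂ / (k : ℝ) ≤
          sInf (insert (1 : ℝ)
            {d : ℝ | ∃ b ∈ (Finset.range k).image (fun j : ℕ => Int.fract (-(j : ℝ) * α)),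
              b ≠ a ∧ d = Int.fract (b - a)}) ∧
        sInf (insert (1 : ℝ)
            {d : ℝ | ∃ b ∈ (Finset.range k).image (fun j : ℕ => Int.fract (-(j : ℝ) * α)),
              b ≠ a ∧ d = Int.fract (b - a)}) < C₁ / (k : ℝ) := by
  obtain ⟨B, hB, hbpq⟩ := hbpq
  have h := BadlyApproximableWith.of_le_abs_sub_div hB hbpq
  refine ⟨2 / B, B, by positivity, hB, fun k _ a ha => ?_⟩
  obtain ⟨j, hj, rfl⟩ := mem_image.1 ha
  rw [div_div]
  exact ⟨h.div_le_circleGap_negOrbit (mem_range.1 hj), h.circleGap_negOrbit_lt (mem_range.1 hj)⟩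

/-- Three-distance estimate: for `α` irrational with bounded partial quotients
(equivalently, badly approximable), there are constants `C₁, C₂ > 0` such that for every
`k ≥ 1`, each gap of the partition of the circle `ℝ/ℤ` by the points `0, -α, …, -(k-1)α`
has length at least `C₂/k` and less than `C₁/k`.  Here points of the circle are
represented by their fractional parts and the gap at a point `a` of the orbit set is the
circular distance from `a` to the next point of the set. -/
theorem stmt3 (α : ℝ) (hα : Irrational α)
    (hbpq : ∃ B : ℝ, 0 < B ∧ ∀ (p : ℤ) (n : ℕ), 0 < n →
      B / (n : ℝ) ^ 2 ≤ |α - (p : ℝ) / (n : ℝ)|) :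
    ∃ C₁ C₂ : ℝ, 0 < C₁ ∧ 0 < C₂ ∧ ∀ k : ℕ, 0 < k →
      ∀ a ∈ (Finset.range k).image (fun j : ℕ => Int.fract (-(j : ℝ) * α)),
        C₂ / (k : ℝ) ≤
          sInf (insert (1 : ℝ)
            {d : ℝ | ∃ b ∈ (Finset.range k).image (fun j : ℕ => Int.fract (-(j : ℝ) * α)),
              b ≠ a ∧ d = Int.fract (b - a)}) ∧
        sInf (insert (1 : ℝ)
            {d : ℝ | ∃ b ∈ (Finset.range k).image (fun j : ℕ => Int.fract (-(j : ℝ) * α)),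
              b ≠ a ∧ d = Int.fract (b - a)}) < C₁ / (k : ℝ) :=
  stmt3_general α hbpq
end

section
/- Let α be irrational with bounded partial quotients, with C₂ the constant from the three-distance estimate (every gap of the partition of 𝕋 by 0, −α, …, −(k−1)α has length ≥ C₂/k). Suppose x₁, …, x_l ∈ 𝕋 satisfy x_i − x_j = r_{ij}/q for some fixed q ∈ ℕ and integers r_{ij} with |r_{ij}| ≤ q. Then for every m ∈ ℕ, any two distinct points of the form x_s + jα, s = 1,…,l, j = 0,…,m−1, have distance on 𝕋 at least C₂/(q²·m). -/
/-!
Write `d` for the difference of the two points. The hypothesis on the `x_i` gives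
`q d = r + q (j - j') α` with `r ∈ ℤ`. If `j = j'`, then `d = r / q` is a rational with
denominator `q` which is not an integer, so `‖d‖ ≥ 1 / q ≥ C₂ / (q² m)`, since the gap estimate
at `k = 2` forces `C₂ ≤ 1`. Otherwise `n = q (j - j')` is a nonzero
integer with `|n| ≤ q m - 1`, and the gap estimate at `k = q m` gives
`C₂ / (q m) ≤ ‖n α‖ = ‖q d‖ ≤ q ‖d‖`.
-/

/-- Distance from a real number to the nearest integer (metric on `ℝ/ℤ`). -/
noncomputable def distToInt (x : ℝ) : ℝ := |x - round x|

lemma distToInt_le_half (x : ℝ) : distToInt x ≤ 1 / 2 := abs_sub_round x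

lemma distToInt_intCast_add (n : ℤ) (x : ℝ) : distToInt (n + x) = distToInt x := by
  unfold distToInt
  rw [round_intCast_add]
  push_cast
  ring_nf

lemma distToInt_natCast_mul_le (n : ℕ) (x : ℝ) : distToInt (n * x) ≤ n * distToInt x :=
  calc distToInt (n * x) ≤ |(n : ℝ) * x - ((n * round x : ℤ) : ℝ)| := round_le _ _
    _ = |(n : ℝ)| * |x - round x| := by
      rw [← abs_mul]
      push_cast
      ring_nf
    _ = n * distToInt x := by rw [Nat.abs_cast, distToInt]

lemma inv_le_distToInt_of_natCast_mul_eq_intCast {q : ℕ} (hq : 0 < q) {y : ℝ} {r : ℤ}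
    (hy : q * y = r) (hne : distToInt y ≠ 0) : (q : ℝ)⁻¹ ≤ distToInt y := by
  have hqR : (0 : ℝ) < q := by exact_mod_cast hq
  have hmul : (q : ℝ) * distToInt y = |((r - q * round y : ℤ) : ℝ)| := by
    rw [distToInt, ← abs_of_pos hqR, ← abs_mul, mul_sub, hy]
    push_cast
    rfl
  have hnum : r - q * round y ≠ 0 := by
    intro h
    rw [h, Int.cast_zero, abs_zero] at hmul
    exact hne ((mul_eq_zero.mp hmul).resolve_left hqR.ne')
  rw [inv_le_iff_one_le_mul₀' hqR, hmul]
  exact_mod_cast Int.one_le_abs hnum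

section GapEstimate

variable {α C₂ : ℝ} (hgap : ∀ k : ℕ, 1 ≤ k → ∀ j : ℤ, j ≠ 0 → |j| ≤ (k : ℤ) - 1 →
  C₂ / (k : ℝ) ≤ distToInt ((j : ℝ) * α))
include hgap

lemma le_one_of_gap : C₂ ≤ 1 := by
  have h := hgap 2 (by norm_num) 1 one_ne_zero (by norm_num)
  rw [Int.cast_one, one_mul] at h
  linarith [distToInt_le_half α]

lemma div_le_distToInt_mul_sub_of_gap {q m j j' : ℕ} (hq : 0 < q) (hj : j < m) (hj' : j' < m)
    (hjj : j ≠ j') :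
    C₂ / ((q * m : ℕ) : ℝ) ≤ distToInt (((q * ((j : ℤ) - j') : ℤ) : ℝ) * α) := by
  refine hgap (q * m) (Nat.one_le_iff_ne_zero.mpr (Nat.mul_ne_zero hq.ne' (by omega))) _
    (mul_ne_zero (by exact_mod_cast hq.ne') (sub_ne_zero.mpr (by exact_mod_cast hjj))) ?_
  have hdiff : |(j : ℤ) - j'| ≤ (m : ℤ) - 1 := by
    rw [abs_sub_le_iff]
    omega
  rw [abs_mul, Nat.abs_cast]
  push_cast
  nlinarith [(by exact_mod_cast hq : (1 : ℤ) ≤ q)]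

end GapEstimate

theorem stmt4_general (α : ℝ) (C₂ : ℝ)
    (hgap : ∀ k : ℕ, 1 ≤ k → ∀ j : ℤ, j ≠ 0 → |j| ≤ (k : ℤ) - 1 →
      C₂ / (k : ℝ) ≤ distToInt ((j : ℝ) * α))
    (l q m : ℕ) (hq : 0 < q) (x : Fin l → ℝ)
    (hx : ∀ i j : Fin l, ∃ r : ℤ, |r| ≤ (q : ℤ) ∧ x i - x j = (r : ℝ) / (q : ℝ)) :
    ∀ (s s' : Fin l) (j j' : ℕ), j < m → j' < m →
      distToInt ((x s + (j : ℝ) * α) - (x s' + (j' : ℝ) * α)) ≠ 0 →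
      C₂ / ((q : ℝ) ^ 2 * (m : ℝ)) ≤
        distToInt ((x s + (j : ℝ) * α) - (x s' + (j' : ℝ) * α)) := by
  intro s s' j j' hj hj' hne
  set d := (x s + (j : ℝ) * α) - (x s' + (j' : ℝ) * α)
  obtain ⟨r, -, hr⟩ := hx s s'
  have hqR : (0 : ℝ) < q := by exact_mod_cast hq
  have hqd : (q : ℝ) * d = r + ((q * ((j : ℤ) - j') : ℤ) : ℝ) * α := by
    have hqx : (q : ℝ) * (x s - x s') = r := by
      rw [hr]
      field_simp
    simp only [d]
    push_cast
    linear_combination hqx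
  rcases eq_or_ne j j' with rfl | hjj
  · have hdq := inv_le_distToInt_of_natCast_mul_eq_intCast hq (by simpa using hqd) hne
    have hq1 : (1 : ℝ) ≤ q := by exact_mod_cast hq
    have hm1 : (1 : ℝ) ≤ m := by exact_mod_cast (j.zero_le.trans_lt hj)
    calc C₂ / ((q : ℝ) ^ 2 * m) ≤ 1 / ((q : ℝ) ^ 2 * m) := by
          gcongr
          exact le_one_of_gap hgap
      _ ≤ 1 / (q : ℝ) := one_div_le_one_div_of_le hqR (by nlinarith)
      _ ≤ distToInt d := by rwa [one_div]
  · have hlow := div_le_distToInt_mul_sub_of_gap hgap hq hj hj' hjj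
    rw [← distToInt_intCast_add r, ← hqd] at hlow
    have hup := distToInt_natCast_mul_le q d
    rw [show (q : ℝ) ^ 2 * m = (q * m : ℕ) * q by push_cast; ring, ← div_div, div_le_iff₀' hqR]
    exact hlow.trans hup

/-- If `x₁, …, x_l` are points of the circle whose pairwise differences are rationals
`r_{ij}/q` with `|r_{ij}| ≤ q`, then any two distinct points of the form `x_s + jα`,
`j = 0, …, m-1`, are at distance at least `C₂/(q² m)` on the circle. -/
theorem stmt4 (α : ℝ) (hα : Irrational α) (C₂ : ℝ) (hC₂ : 0 < C₂)
    (hgap : ∀ k : ℕ, 1 ≤ k → ∀ j : ℤ, j ≠ 0 → |j| ≤ (k : ℤ) - 1 →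
      C₂ / (k : ℝ) ≤ distToInt ((j : ℝ) * α))
    (l q m : ℕ) (hq : 0 < q) (hm : 0 < m) (x : Fin l → ℝ)
    (hx : ∀ i j : Fin l, ∃ r : ℤ, |r| ≤ (q : ℤ) ∧ x i - x j = (r : ℝ) / (q : ℝ)) :
    ∀ (s s' : Fin l) (j j' : ℕ), j < m → j' < m →
      distToInt ((x s + (j : ℝ) * α) - (x s' + (j' : ℝ) * α)) ≠ 0 →
      C₂ / ((q : ℝ) ^ 2 * (m : ℝ)) ≤
        distToInt ((x s + (j : ℝ) * α) - (x s' + (j' : ℝ) * α)) :=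
  stmt4_general α C₂ hgap l q m hq x hx
end

section
/- (Denjoy–Koksma inequality) Let α be irrational with continued fraction denominators (q_n), and let f : 𝕋 → ℝ be a function of bounded variation. Then for every x ∈ 𝕋 and every n, |∑_{k=0}^{q_n − 1} f(x + kα) − q_n ∫_𝕋 f dλ| ≤ Var f. -/
/-!
Write `β = α - p/q`, so `|kβ| ≤ 1/q` for `k < q`. Modulo 1, `x + kα = x + σ(k)/q + kβ` with
`σ(k) = kp mod q`, and `σ` permutes `{0, …, q-1}` because `gcd(p, q) = 1`. Hence, for a suitable
`y ∈ {x, x - 1/q}`, the `q` orbit points fall one into each cell `[y + i/q, y + (i+1)/q]`.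
On a cell of length `1/q`, `f` differs from `q` times its integral over the cell by at most its
variation there; summing over the cells gives `Var f`.
-/

open Set MeasureTheory Finset

theorem BoundedVariationOn.intervalIntegrable {f : ℝ → ℝ} {a b : ℝ} {μ : Measure ℝ}
    [IsLocallyFiniteMeasure μ] (hf : BoundedVariationOn f (uIcc a b)) :
    IntervalIntegrable f μ a b := by
  obtain ⟨g, h, hg, hh, rfl⟩ := hf.locallyBoundedVariationOn.exists_monotoneOn_sub_monotoneOn
  exact hg.intervalIntegrable.sub hh.intervalIntegrable

theorem BoundedVariationOn.abs_integral_sub_mul_le {f : ℝ → ℝ} {a b w : ℝ} (hab : a ≤ b)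
    (hf : BoundedVariationOn f (Icc a b)) (hw : w ∈ Icc a b) :
    |(∫ t in a..b, f t) - (b - a) * f w| ≤ (b - a) * (eVariationOn f (Icc a b)).toReal := by
  have hint : IntervalIntegrable f volume a b :=
    BoundedVariationOn.intervalIntegrable (by rwa [uIcc_of_le hab])
  have hosc : ∀ t ∈ uIoc a b, ‖f t - f w‖ ≤ (eVariationOn f (Icc a b)).toReal := by
    intro t ht
    rw [uIoc_of_le hab] at ht
    simpa only [Real.norm_eq_abs, Real.dist_eq] using hf.dist_le (Ioc_subset_Icc_self ht) hw
  calc |(∫ t in a..b, f t) - (b - a) * f w| = ‖∫ t in a..b, (f t - f w)‖ := by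
        rw [intervalIntegral.integral_sub hint intervalIntegrable_const,
          intervalIntegral.integral_const, smul_eq_mul, Real.norm_eq_abs]
    _ ≤ (eVariationOn f (Icc a b)).toReal * |b - a| :=
        intervalIntegral.norm_integral_le_of_norm_le_const hosc
    _ = (b - a) * (eVariationOn f (Icc a b)).toReal := by
        rw [abs_of_nonneg (sub_nonneg.2 hab), mul_comm]

theorem BoundedVariationOn.abs_mul_sum_sub_integral_le {ι : Type*} {f : ℝ → ℝ} {a h : ℝ}
    {n : ℕ} (hh : 0 ≤ h) (hf : BoundedVariationOn f (Icc a (a + n * h))) {s : Finset ι}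
    {σ : ι → ℕ} (hσ : BijOn σ s (Finset.range n)) {z : ι → ℝ}
    (hz : ∀ k ∈ s, z k ∈ Icc (a + σ k * h) (a + (σ k + 1) * h)) :
    |h * ∑ k ∈ s, f (z k) - ∫ t in a..a + n * h, f t| ≤
      h * (eVariationOn f (Icc a (a + n * h))).toReal := by
  set x : ℕ → ℝ := fun i => a + i * h
  have hx_mono : Monotone x := fun i j hij => by simp only [x]; gcongr
  have hx_succ : ∀ i : ℕ, x (i + 1) = a + (i + 1) * h := fun i => by
    simp only [x]; push_cast; ring
  have hx_zero : x 0 = a := by simp [x]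
  have hx_step : ∀ i : ℕ, x (i + 1) - x i = h := fun i => by rw [hx_succ]; ring
  have hcell : ∀ i < n, BoundedVariationOn f (Icc (x i) (x (i + 1))) := fun i hi =>
    hf.mono (Icc_subset_Icc (hx_zero ▸ hx_mono (Nat.zero_le i)) (hx_mono hi))
  have reindex : ∀ {M : Type} [AddCommMonoid M] (g : ℕ → M),
      ∑ k ∈ s, g (σ k) = ∑ i ∈ range n, g i := fun g =>
    sum_nbij σ (fun _ hk => hσ.mapsTo hk) hσ.injOn hσ.surjOn (fun _ _ => rfl)
  have hint : ∫ t in a..a + n * h, f t = ∑ k ∈ s, ∫ t in x (σ k)..x (σ k + 1), f t := by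
    rw [reindex (fun i => ∫ t in x i..x (i + 1), f t),
      intervalIntegral.sum_integral_adjacent_intervals fun i hi =>
        BoundedVariationOn.intervalIntegrable <| by
          rw [uIcc_of_le (hx_mono (Nat.le_add_right i 1))]; exact hcell i hi,
      hx_zero]
  have hvar : eVariationOn f (Icc a (a + n * h)) =
      ∑ k ∈ s, eVariationOn f (Icc (x (σ k)) (x (σ k + 1))) := by
    rw [reindex (fun i => eVariationOn f (Icc (x i) (x (i + 1)))), eVariationOn.sum' f hx_mono,
      hx_zero]
  rw [hint, hvar, ENNReal.toReal_sum fun k hk => hcell _ (mem_range.1 (hσ.mapsTo hk)), mul_sum,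
    mul_sum, ← sum_sub_distrib]
  refine (abs_sum_le_sum_abs _ _).trans (sum_le_sum fun k hk => ?_)
  have := (hcell _ (mem_range.1 (hσ.mapsTo hk))).abs_integral_sub_mul_le
    (hx_mono (Nat.le_add_right _ 1)) (hx_succ (σ k) ▸ hz k hk)
  rwa [hx_step, abs_sub_comm] at this

namespace Function.Periodic

variable {f : ℝ → ℝ} {c : ℝ}

theorem eVariationOn_Icc_add (hf : Periodic f c) (a b : ℝ) :
    eVariationOn f (Icc (a + c) (b + c)) = eVariationOn f (Icc a b) := by
  have h := eVariationOn.comp_eq_of_monotoneOn f (· + c)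
    ((monotone_id.add_const c).monotoneOn (Icc a b))
  rw [image_add_const_Icc] at h
  rw [← h]
  exact congrArg (eVariationOn · (Icc a b)) hf.funext

theorem eVariationOn_Icc_add_period (hf : Periodic f c) (hc : 0 < c) (y : ℝ) :
    eVariationOn f (Icc y (y + c)) = eVariationOn f (Icc 0 c) := by
  have split : ∀ {a b d : ℝ}, a ≤ b → b ≤ d →
      eVariationOn f (Icc a b) + eVariationOn f (Icc b d) = eVariationOn f (Icc a d) :=
    fun hab hbd => by simpa using eVariationOn.Icc_add_Icc f hab hbd (mem_univ _)
  -- `m` is the multiple of `c` in `[y, y + c]`; cutting there and moving `[m, y + c]` down by `c`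
  -- reassembles `[m - c, m]`.
  set n : ℤ := ⌈y / c⌉
  set m : ℝ := n * c
  have hym : y ≤ m := (div_le_iff₀ hc).1 (Int.le_ceil _)
  have hmy : m ≤ y + c := by
    have hn : (n : ℝ) < (y + c) / c := by
      rw [add_div, div_self hc.ne']
      exact Int.ceil_lt_add_one _
    exact ((lt_div_iff₀ hc).1 hn).le
  calc eVariationOn f (Icc y (y + c))
      = eVariationOn f (Icc y m) + eVariationOn f (Icc (m - c + c) (y + c)) := by
        rw [sub_add_cancel, split hym hmy]
    _ = eVariationOn f (Icc (m - c) m) := by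
        rw [hf.eVariationOn_Icc_add, add_comm, split (by linarith) hym]
    _ = eVariationOn f (Icc 0 c) := by
        have := (hf.int_mul (n - 1)).eVariationOn_Icc_add 0 c
        push_cast at this
        rw [← this]; congr 2 <;> ring

theorem abs_sum_sub_mul_integral_le {ι : Type*} (hf : Periodic f 1)
    (hbv : BoundedVariationOn f (Icc 0 1)) {q : ℕ} (hq : 0 < q) (y : ℝ)
    {s : Finset ι} {σ : ι → ℕ} (hσ : BijOn σ s (Finset.range q)) {z : ι → ℝ}
    (hz : ∀ k ∈ s, z k ∈ Icc (y + σ k / q) (y + (σ k + 1) / q)) :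
    |∑ k ∈ s, f (z k) - q * ∫ t in (0 : ℝ)..1, f t| ≤
      (eVariationOn f (Icc 0 1)).toReal := by
  have hq' : (0 : ℝ) < q := Nat.cast_pos.2 hq
  have hend : y + q * (q : ℝ)⁻¹ = y + 1 := by rw [mul_inv_cancel₀ hq'.ne']
  have hvar : eVariationOn f (Icc y (y + 1)) = eVariationOn f (Icc 0 1) :=
    hf.eVariationOn_Icc_add_period one_pos y
  have hint : ∫ t in y..y + 1, f t = ∫ t in (0 : ℝ)..1, f t := by
    simpa using hf.intervalIntegral_add_eq y 0
  have hriemann := BoundedVariationOn.abs_mul_sum_sub_integral_le (f := f) (z := z)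
    (inv_nonneg.2 hq'.le) (by rw [hend, BoundedVariationOn, hvar]; exact hbv) hσ
    (by simpa only [div_eq_mul_inv] using hz)
  rw [hend, hint, hvar] at hriemann
  calc |∑ k ∈ s, f (z k) - q * ∫ t in (0 : ℝ)..1, f t|
      = q * |(q : ℝ)⁻¹ * ∑ k ∈ s, f (z k) - ∫ t in (0 : ℝ)..1, f t| := by
        rw [← abs_of_pos hq', ← abs_mul, abs_of_pos hq', mul_sub,
          mul_inv_cancel_left₀ hq'.ne']
    _ ≤ q * ((q : ℝ)⁻¹ * (eVariationOn f (Icc 0 1)).toReal) := by gcongr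
    _ = (eVariationOn f (Icc 0 1)).toReal := mul_inv_cancel_left₀ hq'.ne' _

end Function.Periodic

theorem bijOn_toNat_mul_emod {p : ℤ} {q : ℕ} (hcop : Int.gcd p q = 1) :
    BijOn (fun k : ℕ => ((k * p) % q).toNat) (Finset.range q) (Finset.range q) := by
  have hmaps : MapsTo (fun k : ℕ => ((k * p) % q).toNat) (Finset.range q) (Finset.range q) := by
    intro k hk
    have hq : (0 : ℤ) < q := by have := mem_range.1 hk; omega
    have := Int.emod_lt_of_pos (k * p) hq
    simp only [coe_range, Set.mem_Iio]
    omega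
  have hinj : InjOn (fun k : ℕ => ((k * p) % q).toNat) (Finset.range q) := by
    intro k₁ hk₁ k₂ hk₂ h
    have hq : (0 : ℤ) < q := by have := mem_range.1 hk₁; omega
    have hmod : (k₁ : ℤ) * p ≡ k₂ * p [ZMOD q] := by
      have h₁ := Int.emod_nonneg (k₁ * p) hq.ne'
      have h₂ := Int.emod_nonneg (k₂ * p) hq.ne'
      simp only at h
      unfold Int.ModEq
      omega
    have := Int.ModEq.cancel_right_div_gcd hq hmod
    rw [Int.gcd_comm, hcop, Nat.cast_one, Int.ediv_one, Int.natCast_modEq_iff] at this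
    exact this.eq_of_lt_of_lt (mem_range.1 hk₁) (mem_range.1 hk₂)
  exact ⟨hmaps, hinj, Finset.surjOn_of_injOn_of_card_le _ hmaps hinj le_rfl⟩

theorem exists_forall_natCast_mul_mem_Icc {β : ℝ} {q : ℕ} (hβ : |β| ≤ 1 / q ^ 2) :
    ∃ s : ℝ, ∀ k < q, (k : ℝ) * β ∈ Icc s (s + 1 / q) := by
  have hbound : ∀ k < q, |(k : ℝ) * β| ≤ 1 / q := fun k hk => by
    have hq : (0 : ℝ) < q := by exact_mod_cast (Nat.zero_le k).trans_lt hk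
    have hkq : (k : ℝ) ≤ q := by exact_mod_cast hk.le
    calc |(k : ℝ) * β| = k * |β| := by rw [abs_mul, Nat.abs_cast]
      _ ≤ q * (1 / q ^ 2) := by gcongr
      _ = 1 / q := by field_simp
  rcases le_total 0 β with hβ₀ | hβ₀
  · refine ⟨0, fun k hk => ⟨by positivity, ?_⟩⟩
    simpa using (le_abs_self _).trans (hbound k hk)
  · refine ⟨-(1 / q), fun k hk => ⟨neg_le_of_abs_le (hbound k hk), ?_⟩⟩
    simpa using mul_nonpos_of_nonneg_of_nonpos (Nat.cast_nonneg k) hβ₀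

theorem stmt6_general (α : ℝ) (f : ℝ → ℝ)
    (hper : Function.Periodic f 1)
    (hbv : BoundedVariationOn f (Set.Icc 0 1))
    (q : ℕ) (hq : 0 < q) (p : ℤ) (hcop : Int.gcd p (q : ℤ) = 1)
    (happ : |α - (p : ℝ) / (q : ℝ)| < 1 / (q : ℝ) ^ 2) :
    ∀ x : ℝ,
      |∑ k ∈ Finset.range q, f (x + (k : ℝ) * α) - (q : ℝ) * ∫ y in (0:ℝ)..1, f y| ≤
        (eVariationOn f (Set.Icc 0 1)).toReal := by
  intro x
  obtain ⟨s, hs⟩ := exists_forall_natCast_mul_mem_Icc happ.le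
  set σ : ℕ → ℕ := fun k => ((k * p) % q).toNat
  have hshift : ∀ k : ℕ, f (x + k * α) = f (x + σ k / q + k * (α - p / q)) := fun k => by
    have hσ : (σ k : ℤ) + q * (k * p / q) = k * p := by
      rw [Int.toNat_of_nonneg (Int.emod_nonneg _ (by omega)), Int.emod_add_mul_ediv]
    have hσ' : (σ k : ℝ) + q * ((k * p / q : ℤ) : ℝ) = k * p := by exact_mod_cast hσ
    rw [← hper.int_mul (k * p / q) (x + σ k / q + k * (α - p / q))]
    congr 1
    field_simp
    linear_combination -hσ'
  rw [Finset.sum_congr rfl fun k _ => hshift k]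
  refine hper.abs_sum_sub_mul_integral_le hbv hq (x + s) (bijOn_toNat_mul_emod hcop)
    fun k hk => ?_
  obtain ⟨hlo, hhi⟩ := hs k (mem_range.1 hk)
  rw [add_div]
  constructor <;> linarith

/-- Denjoy–Koksma inequality: if `f : 𝕋 → ℝ` (a `1`-periodic function) has bounded
variation on `[0,1]` and `p/q` is a continued-fraction convergent of the irrational `α`
(so `gcd(p,q) = 1` and `|α - p/q| < 1/q²`), then for every `x`,
`|∑_{k<q} f(x + kα) - q ∫₀¹ f| ≤ Var f`. -/
theorem stmt6 (α : ℝ) (hα : Irrational α) (f : ℝ → ℝ)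
    (hper : Function.Periodic f 1)
    (hbv : BoundedVariationOn f (Set.Icc 0 1))
    (q : ℕ) (hq : 0 < q) (p : ℤ) (hcop : Int.gcd p (q : ℤ) = 1)
    (happ : |α - (p : ℝ) / (q : ℝ)| < 1 / (q : ℝ) ^ 2) :
    ∀ x : ℝ,
      |∑ k ∈ Finset.range q, f (x + (k : ℝ) * α) - (q : ℝ) * ∫ y in (0:ℝ)..1, f y| ≤
        (eVariationOn f (Set.Icc 0 1)).toReal :=
  stmt6_general α f hper hbv q hq p hcop happ
end

section
/- Let T be an ergodic measure-preserving automorphism of a probability space (X, ℬ, μ) and A ∈ ℬ. For every θ, γ, τ > 0 there exist N ∈ ℕ and a set Z ∈ ℬ with μ(Z) > 1 − γ such that for all M, L ∈ ℕ with M, L > N and L/M > τ, and all x ∈ Z: |(1/L)·∑_{j=M}^{M+L} χ_A(T^j x) − μ(A)| < θ. -/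
/-!
Birkhoff's pointwise ergodic theorem is derived from the maximal ergodic theorem (Garsia's
argument). If `∫ f < β`, the set where some Birkhoff sum of `f - β` is positive carries a
nonnegative integral of `f - β`, so it is not conull; by ergodicity almost every orbit enters its
complement, and from then on the Birkhoff sums of `f` grow at most like `β n`. Egorov's theorem
makes `S_n / n → μ(A)` uniform off a set of small measure. A window sum is `S_{M+L+1} - S_M`, which
differs from `L μ(A)` by `O((M + L) ε) + 1`; since `M < L / τ` this is small compared to `L`.
-/

open MeasureTheory Filter Set Topology

section MaximalErgodic

variable {X : Type*} {T : X → X} {f : X → ℝ}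

noncomputable def maxBirkhoffSum (T : X → X) (f : X → ℝ) (n : ℕ) (x : X) : ℝ :=
  partialSups (fun k => birkhoffSum T f k x) n

lemma birkhoffSum_le_maxBirkhoffSum {k n : ℕ} (h : k ≤ n) (x : X) :
    birkhoffSum T f k x ≤ maxBirkhoffSum T f n x :=
  le_partialSups_of_le (fun k => birkhoffSum T f k x) h

lemma maxBirkhoffSum_nonneg (n : ℕ) (x : X) : 0 ≤ maxBirkhoffSum T f n x := by
  simpa using birkhoffSum_le_maxBirkhoffSum (T := T) (f := f) n.zero_le x

lemma maxBirkhoffSum_zero : maxBirkhoffSum T f 0 = 0 := by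
  funext x
  simp [maxBirkhoffSum]

lemma maxBirkhoffSum_succ (n : ℕ) (x : X) :
    maxBirkhoffSum T f (n + 1) x = max (maxBirkhoffSum T f n x) (birkhoffSum T f (n + 1) x) :=
  partialSups_succ _ n

lemma pos_maxBirkhoffSum_iff {n : ℕ} {x : X} :
    0 < maxBirkhoffSum T f n x ↔ ∃ k ≤ n, 0 < birkhoffSum T f k x := by
  simp only [maxBirkhoffSum, ← not_le, partialSups_le_iff, not_forall, exists_prop]

lemma maxBirkhoffSum_le_max_zero_add (n : ℕ) (x : X) :
    maxBirkhoffSum T f n x ≤ max 0 (f x + maxBirkhoffSum T f n (T x)) := by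
  refine partialSups_le _ _ _ fun k hk => ?_
  cases k with
  | zero => simp
  | succ k =>
    rw [birkhoffSum_succ']
    exact le_max_of_le_right (by gcongr; exact birkhoffSum_le_maxBirkhoffSum (by omega) _)

variable [MeasurableSpace X] {μ : Measure X}

lemma measurable_birkhoffSum (hT : Measurable T) (hf : Measurable f) (n : ℕ) :
    Measurable (birkhoffSum T f n) :=
  Finset.measurable_sum _ fun k _ => hf.comp (hT.iterate k)

lemma measurable_maxBirkhoffSum (hT : Measurable T) (hf : Measurable f) (n : ℕ) :
    Measurable (maxBirkhoffSum T f n) := by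
  induction n with
  | zero => rw [maxBirkhoffSum_zero]; exact measurable_zero
  | succ n ih =>
    simp_rw [funext (maxBirkhoffSum_succ (T := T) (f := f) n)]
    exact ih.max (measurable_birkhoffSum hT hf _)

lemma integrable_birkhoffSum (hT : MeasurePreserving T μ μ) (hf : Integrable f μ) (n : ℕ) :
    Integrable (birkhoffSum T f n) μ :=
  integrable_finsetSum _ fun k _ => (hT.iterate k).integrable_comp_of_integrable hf

lemma integrable_maxBirkhoffSum (hT : MeasurePreserving T μ μ) (hf : Integrable f μ) (n : ℕ) :
    Integrable (maxBirkhoffSum T f n) μ := by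
  induction n with
  | zero => simp [maxBirkhoffSum_zero]
  | succ n ih =>
    simp_rw [funext (maxBirkhoffSum_succ (T := T) (f := f) n)]
    exact ih.sup (integrable_birkhoffSum hT hf _)

lemma MeasureTheory.MeasurePreserving.setIntegral_maxBirkhoffSum_pos_nonneg
    (hT : MeasurePreserving T μ μ) (hf : Measurable f) (hfi : Integrable f μ) (n : ℕ) :
    0 ≤ ∫ x in {x | 0 < maxBirkhoffSum T f n x}, f x ∂μ := by
  set M := maxBirkhoffSum T f n
  have hMm : Measurable M := measurable_maxBirkhoffSum hT.measurable hf n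
  have hM : Integrable M μ := integrable_maxBirkhoffSum hT hfi n
  have hMT : Integrable (M ∘ T) μ := hT.integrable_comp_of_integrable hM
  have hE : MeasurableSet {x | 0 < M x} := measurableSet_lt measurable_const hMm
  -- Garsia's observation: `f ≥ M - M ∘ T` wherever `M > 0`.
  have hgarsia : ∀ x ∈ {x | 0 < M x}, M x - M (T x) ≤ f x := fun x hx => by
    have := (le_max_iff.1 (maxBirkhoffSum_le_max_zero_add (T := T) (f := f) n x)).resolve_left
      (not_le.2 hx)
    linarith
  calc 0 = ∫ x, M x ∂μ - ∫ x, M (T x) ∂μ := by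
        rw [← integral_map hT.measurable.aemeasurable hMm.aestronglyMeasurable, hT.map_eq, sub_self]
    _ ≤ ∫ x in {x | 0 < M x}, M x ∂μ - ∫ x in {x | 0 < M x}, M (T x) ∂μ := by
        have hMset : ∫ x in {x | 0 < M x}, M x ∂μ = ∫ x, M x ∂μ :=
          setIntegral_eq_integral_of_forall_compl_eq_zero fun x hx =>
            le_antisymm (not_lt.1 hx) (maxBirkhoffSum_nonneg n x)
        rw [hMset]
        exact sub_le_sub_left (setIntegral_le_integral hMT
          (Eventually.of_forall fun x => maxBirkhoffSum_nonneg n (T x))) _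
    _ = ∫ x in {x | 0 < M x}, (M x - M (T x)) ∂μ :=
        (integral_sub hM.integrableOn hMT.integrableOn).symm
    _ ≤ ∫ x in {x | 0 < M x}, f x ∂μ :=
        setIntegral_mono_on (hM.sub hMT).integrableOn hfi.integrableOn hE hgarsia

theorem MeasureTheory.MeasurePreserving.setIntegral_exists_birkhoffSum_pos_nonneg
    (hT : MeasurePreserving T μ μ) (hf : Measurable f) (hfi : Integrable f μ) :
    0 ≤ ∫ x in {x | ∃ n, 0 < birkhoffSum T f n x}, f x ∂μ := by
  have hunion : {x | ∃ n, 0 < birkhoffSum T f n x} = ⋃ n, {x | 0 < maxBirkhoffSum T f n x} := by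
    ext x
    simp only [mem_iUnion]
    change (∃ n, _) ↔ ∃ n, 0 < maxBirkhoffSum T f n x
    simp only [pos_maxBirkhoffSum_iff]
    exact ⟨fun ⟨n, hn⟩ => ⟨n, n, le_rfl, hn⟩, fun ⟨_, k, _, hk⟩ => ⟨k, hk⟩⟩
  have hmono : Monotone fun n => {x | 0 < maxBirkhoffSum T f n x} := fun _ _ hmn x hx =>
    (show 0 < maxBirkhoffSum T f _ x from hx).trans_le
      (partialSups_monotone (fun k => birkhoffSum T f k x) hmn)
  rw [hunion]
  exact ge_of_tendsto' (tendsto_setIntegral_of_monotone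
    (fun n => measurableSet_lt measurable_const (measurable_maxBirkhoffSum hT.measurable hf n))
    hmono hfi.integrableOn) (hT.setIntegral_maxBirkhoffSum_pos_nonneg hf hfi)

end MaximalErgodic

section Birkhoff

variable {X : Type*} {T : X → X} {f : X → ℝ}

lemma eventually_birkhoffAverage_lt_of_forall_birkhoffSum_iterate_le {β β' : ℝ} (hβ : β < β')
    {m : ℕ} {x : X} (h : ∀ k, birkhoffSum T f k (T^[m] x) ≤ k * β) :
    ∀ᶠ n in atTop, birkhoffAverage ℝ T f n x < β' := by
  set C := birkhoffSum T f m x - m * β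
  have hsum : ∀ n, m ≤ n → birkhoffSum T f n x ≤ C + n * β := fun n hn => by
    obtain ⟨k, rfl⟩ := Nat.exists_eq_add_of_le hn
    have := h k
    rw [birkhoffSum_add]
    push_cast
    linarith
  have hlim : Tendsto (fun n : ℕ => β + C / n) atTop (𝓝 β) := by
    simpa using tendsto_const_nhds.add (tendsto_const_div_atTop_nhds_zero_nat C)
  filter_upwards [hlim.eventually_lt_const hβ, eventually_ge_atTop m, eventually_gt_atTop 0]
    with n hlt hm hn
  have hn' : (0 : ℝ) < n := by exact_mod_cast hn
  calc birkhoffAverage ℝ T f n x = birkhoffSum T f n x / n := by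
        rw [birkhoffAverage, smul_eq_mul, inv_mul_eq_div]
    _ ≤ (C + n * β) / n := by gcongr; exact hsum n hm
    _ = β + C / n := by field_simp; ring
    _ < β' := hlt

variable [MeasurableSpace X] {μ : Measure X}

lemma Ergodic.ae_exists_iterate_mem [IsFiniteMeasure μ] (hT : Ergodic T μ) {s : Set X}
    (hs : MeasurableSet s) (h0 : μ s ≠ 0) : ∀ᵐ x ∂μ, ∃ m, T^[m] x ∈ s := by
  set U := ⋃ m, T^[m] ⁻¹' s
  have hU : MeasurableSet U := .iUnion fun m => hs.preimage (hT.measurable.iterate m)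
  have hTU : T ⁻¹' U ⊆ U := fun x hx => by
    obtain ⟨m, hm⟩ := mem_iUnion.1 hx
    exact mem_iUnion.2 ⟨m + 1, by rwa [mem_preimage, Function.iterate_succ_apply]⟩
  rcases hT.ae_empty_or_univ_of_preimage_ae_le hU.nullMeasurableSet hTU.eventuallyLE with h | h
  · exact absurd (measure_mono_null (subset_iUnion_of_subset 0 subset_rfl) (ae_eq_empty.1 h)) h0
  · filter_upwards [mem_ae_iff.2 (ae_eq_univ.1 h)] with x hx
    exact mem_iUnion.1 hx

lemma Ergodic.ae_exists_iterate_forall_birkhoffSum_le [IsProbabilityMeasure μ] (hT : Ergodic T μ)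
    (hf : Measurable f) (hfi : Integrable f μ) {β : ℝ} (hβ : ∫ x, f x ∂μ < β) :
    ∀ᵐ x ∂μ, ∃ m, ∀ k, birkhoffSum T f k (T^[m] x) ≤ k * β := by
  set g : X → ℝ := fun x => f x - β
  have hg : ∀ k y, birkhoffSum T g k y = birkhoffSum T f k y - k * β := fun k y => by
    simp [g, birkhoffSum, Finset.sum_sub_distrib]
  have hgi : Integrable g μ := hfi.sub (integrable_const β)
  have hgneg : ∫ x, g x ∂μ < 0 := by
    rw [integral_sub hfi (integrable_const β), integral_const, probReal_univ, one_smul]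
    linarith
  set E := {x | ∃ n, 0 < birkhoffSum T g n x}
  have hE : MeasurableSet E := by
    simpa only [E, ofPred_exists] using MeasurableSet.iUnion fun n =>
      measurableSet_lt measurable_const (measurable_birkhoffSum hT.measurable (hf.sub_const β) n)
  -- By the maximal ergodic theorem `∫_E g ≥ 0 > ∫ g`, so `E` is not conull.
  have hEc : μ Eᶜ ≠ 0 := fun h0 => by
    have : 0 ≤ ∫ x in E, g x ∂μ :=
      hT.toMeasurePreserving.setIntegral_exists_birkhoffSum_pos_nonneg (hf.sub_const β) hgi
    rw [Measure.restrict_eq_self_of_ae_mem (s := E) (mem_ae_iff.2 h0)] at this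
    linarith
  filter_upwards [hT.ae_exists_iterate_mem hE.compl hEc] with x ⟨m, hm⟩
  refine ⟨m, fun k => ?_⟩
  have : ¬ 0 < birkhoffSum T g k (T^[m] x) := fun hk => hm ⟨k, hk⟩
  rw [hg] at this
  linarith

lemma Ergodic.ae_eventually_birkhoffAverage_lt [IsProbabilityMeasure μ] (hT : Ergodic T μ)
    (hf : Measurable f) (hfi : Integrable f μ) {β : ℝ} (hβ : ∫ x, f x ∂μ < β) :
    ∀ᵐ x ∂μ, ∀ᶠ n in atTop, birkhoffAverage ℝ T f n x < β := by
  obtain ⟨β₀, hβ₀, hβ₀β⟩ := exists_between hβ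
  filter_upwards [hT.ae_exists_iterate_forall_birkhoffSum_le hf hfi hβ₀] with x ⟨m, hm⟩
  exact eventually_birkhoffAverage_lt_of_forall_birkhoffSum_iterate_le hβ₀β hm

lemma Ergodic.ae_forall_rat_eventually_birkhoffAverage_lt [IsProbabilityMeasure μ]
    (hT : Ergodic T μ) (hf : Measurable f) (hfi : Integrable f μ) :
    ∀ᵐ x ∂μ, ∀ q : ℚ, ∫ x, f x ∂μ < q → ∀ᶠ n in atTop, birkhoffAverage ℝ T f n x < q := by
  refine ae_all_iff.2 fun q => ?_
  by_cases hq : ∫ x, f x ∂μ < q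
  · filter_upwards [hT.ae_eventually_birkhoffAverage_lt hf hfi hq] with x hx using fun _ => hx
  · exact Eventually.of_forall fun x h => absurd h hq

/-- **Birkhoff's pointwise ergodic theorem** for an ergodic map. -/
theorem Ergodic.ae_tendsto_birkhoffAverage [IsProbabilityMeasure μ] (hT : Ergodic T μ)
    (hf : Measurable f) (hfi : Integrable f μ) :
    ∀ᵐ x ∂μ, Tendsto (birkhoffAverage ℝ T f · x) atTop (𝓝 (∫ x, f x ∂μ)) := by
  filter_upwards [hT.ae_forall_rat_eventually_birkhoffAverage_lt hf hfi,
    hT.ae_forall_rat_eventually_birkhoffAverage_lt hf.neg hfi.neg] with x hupper hlower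
  refine tendsto_order.2 ⟨fun b hb => ?_, fun b hb => ?_⟩
  · obtain ⟨q, hbq, hq⟩ := exists_rat_btwn hb
    have hneg : ∫ x, (-f) x ∂μ < ((-q : ℚ) : ℝ) := by
      push_cast
      simpa [integral_neg] using hq
    filter_upwards [hlower (-q) hneg] with n hn
    rw [birkhoffAverage_neg] at hn
    push_cast at hn
    linarith [neg_lt_neg_iff.1 hn]
  · obtain ⟨q, hbq, hq⟩ := exists_rat_btwn hb
    filter_upwards [hupper q hbq] with n hn using hn.trans hq

end Birkhoff

lemma MeasureTheory.exists_measurableSet_one_sub_lt_and_tendstoUniformlyOn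
    {X β : Type*} [MeasurableSpace X] [MetricSpace β] {μ : Measure X} [IsProbabilityMeasure μ]
    {F : ℕ → X → β} {g : X → β} (hF : ∀ n, StronglyMeasurable (F n)) (hg : StronglyMeasurable g)
    (hFg : ∀ᵐ x ∂μ, Tendsto (F · x) atTop (𝓝 (g x))) {γ : ℝ} (hγ : 0 < γ) :
    ∃ Z, MeasurableSet Z ∧ 1 - ENNReal.ofReal γ < μ Z ∧ TendstoUniformlyOn F g atTop Z := by
  obtain ⟨t, ht, hμt, hunif⟩ :=
    tendstoUniformlyOn_of_ae_tendsto' hF hg hFg (half_pos (lt_min hγ one_pos))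
  refine ⟨tᶜ, ht.compl, ?_, hunif⟩
  have hlt : μ t < min (ENNReal.ofReal γ) 1 := by
    refine hμt.trans_lt ?_
    rw [← ENNReal.ofReal_one, ← ENNReal.ofReal_min]
    exact (ENNReal.ofReal_lt_ofReal_iff (lt_min hγ one_pos)).2 (half_lt_self (lt_min hγ one_pos))
  have hmin : min (ENNReal.ofReal γ) 1 ≤ 1 := min_le_right _ _
  rw [prob_compl_eq_one_sub ht]
  calc 1 - ENNReal.ofReal γ ≤ 1 - min (ENNReal.ofReal γ) 1 := tsub_le_tsub_left (min_le_left _ _) 1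
    _ < 1 - μ t := ((ENNReal.cancel_of_ne ENNReal.one_ne_top).tsub_lt_tsub_iff_left_of_le
        (ENNReal.cancel_of_ne (ne_top_of_le_ne_top ENNReal.one_ne_top hmin)) hmin).2 hlt

lemma abs_sub_sub_mul_lt_of_abs_inv_mul_sub_lt {a b c ε p r : ℝ} (hp : 0 < p) (hr : 0 < r)
    (ha : |r⁻¹ * a - c| < ε) (hb : |p⁻¹ * b - c| < ε) :
    |a - b - (r - p) * c| < (r + p) * ε := by
  have hsplit : a - b - (r - p) * c = r * (r⁻¹ * a - c) - p * (p⁻¹ * b - c) := by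
    field_simp
    ring
  calc |a - b - (r - p) * c| ≤ r * |r⁻¹ * a - c| + p * |p⁻¹ * b - c| := by
        rw [hsplit, ← abs_of_pos hr, ← abs_of_pos hp, ← abs_mul, ← abs_mul, abs_of_pos hr,
          abs_of_pos hp]
        exact abs_sub _ _
    _ < r * ε + p * ε := by gcongr
    _ = (r + p) * ε := by ring

lemma TendstoUniformlyOn.exists_forall_abs_window_average_sub_lt {ι : Type*} {s : ι → ℕ → ℝ}
    {c : ℝ} {Z : Set ι}
    (h : TendstoUniformlyOn (fun (n : ℕ) i => (n : ℝ)⁻¹ * s i n) (fun _ => c) atTop Z)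
    {θ τ : ℝ} (hθ : 0 < θ) (hτ : 0 < τ) :
    ∃ N : ℕ, ∀ M L : ℕ, N < M → N < L → τ < (L : ℝ) / M → ∀ i ∈ Z,
      |(1 / (L : ℝ)) * (s i (M + L + 1) - s i M) - c| < θ := by
  -- `ε` is chosen so that `(2M + 2L) ε ≤ θ L / 2` whenever `τ M < L`.
  set ε := θ * τ / (4 * (τ + 1))
  have hε : 0 < ε := by positivity
  obtain ⟨N₀, hN₀⟩ := (Metric.tendstoUniformlyOn_iff.1 h ε hε).exists_forall_of_atTop
  refine ⟨max N₀ ⌈2 * |c| / θ⌉₊, fun M L hM hL hML i hi => ?_⟩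
  have hM₀ : 0 < M := by omega
  have hMR : (0 : ℝ) < M := by exact_mod_cast hM₀
  have hLR : (0 : ℝ) < L := by exact_mod_cast (show 0 < L by omega)
  have hclose : ∀ n, N₀ ≤ n → |(n : ℝ)⁻¹ * s i n - c| < ε := fun n hn => by
    rw [← Real.dist_eq, dist_comm]
    exact hN₀ n hn i hi
  have hwindow := abs_sub_sub_mul_lt_of_abs_inv_mul_sub_lt hMR (by positivity)
    (hclose (M + L + 1) (by omega)) (hclose M (by omega))
  push_cast at hwindow
  have hcL : 2 * |c| ≤ θ * L := by
    have := (Nat.le_ceil (2 * |c| / θ)).trans_lt (show (⌈2 * |c| / θ⌉₊ : ℝ) < L by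
      exact_mod_cast (le_max_right _ _).trans_lt hL)
    rw [div_lt_iff₀ hθ] at this
    linarith
  have hεL : ((M : ℝ) + L + 1 + M) * ε ≤ θ * L / 2 := by
    have hML' : (M : ℝ) ≤ L / τ := by
      rw [le_div_iff₀ hτ]
      exact ((lt_div_iff₀ hMR).1 hML).le.trans_eq' (mul_comm _ _)
    have h1 : (1 : ℝ) ≤ L := by exact_mod_cast (show 1 ≤ L by omega)
    calc ((M : ℝ) + L + 1 + M) * ε ≤ (2 * (L / τ) + 2 * L) * ε :=
          mul_le_mul_of_nonneg_right (by linarith) hε.le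
      _ = θ * L / 2 := by simp only [ε]; field_simp; ring
  calc |(1 / (L : ℝ)) * (s i (M + L + 1) - s i M) - c|
      = |(s i (M + L + 1) - s i M - ((M + L + 1) - M) * c) + c| / L := by
        rw [← abs_of_pos hLR, ← abs_div, abs_of_pos hLR]
        congr 1
        field_simp
        ring
    _ ≤ (|s i (M + L + 1) - s i M - ((M + L + 1) - M) * c| + |c|) / L := by
        gcongr
        exact abs_add_le _ _
    _ < θ := by
        rw [div_lt_iff₀ hLR]
        linarith

lemma sum_Icc_comp_iterate_eq_birkhoffSum_sub {X M : Type*} [AddCommGroup M] (T : X → X)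
    (f : X → M) (m l : ℕ) (x : X) :
    ∑ j ∈ Finset.Icc m (m + l), f (T^[j] x) =
      birkhoffSum T f (m + l + 1) x - birkhoffSum T f m x := by
  rw [← Finset.Ico_add_one_right_eq_Icc, Finset.sum_Ico_eq_sub _ (by omega)]
  rfl

/-- Uniform windowed ergodic theorem: for an ergodic `T` on a probability space and
`A` measurable, for all `θ, γ, τ > 0` there are `N` and a set `Z` of measure `> 1 - γ`
such that for all windows `[M, M+L]` with `M, L > N`, `L/M > τ`, the window averages of
`χ_A` along the orbit of any `x ∈ Z` are within `θ` of `μ(A)`. -/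
theorem stmt10 {X : Type*} [MeasurableSpace X] (μ : Measure X)
    [IsProbabilityMeasure μ] (T : X → X) (hT : Ergodic T μ)
    (A : Set X) (hA : MeasurableSet A) :
    ∀ θ γ τ : ℝ, 0 < θ → 0 < γ → 0 < τ →
      ∃ N : ℕ, ∃ Z : Set X, MeasurableSet Z ∧ 1 - ENNReal.ofReal γ < μ Z ∧
        ∀ M L : ℕ, N < M → N < L → τ < (L : ℝ) / (M : ℝ) →
          ∀ x ∈ Z,
            |(1 / (L : ℝ)) * ∑ j ∈ Finset.Icc M (M + L),
                A.indicator (fun _ => (1 : ℝ)) (T^[j] x) - (μ A).toReal| < θ := by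
  intro θ γ τ hθ hγ hτ
  let f : X → ℝ := A.indicator fun _ => 1
  have hf : Measurable f := measurable_const.indicator hA
  have hlim : ∀ᵐ x ∂μ, Tendsto (birkhoffAverage ℝ T f · x) atTop (𝓝 (μ A).toReal) := by
    have := hT.ae_tendsto_birkhoffAverage hf ((integrable_const (1 : ℝ)).indicator hA)
    rwa [integral_indicator_const 1 hA, smul_eq_mul, mul_one] at this
  obtain ⟨Z, hZ, hμZ, hunif⟩ := exists_measurableSet_one_sub_lt_and_tendstoUniformlyOn
    (fun n => ((measurable_birkhoffSum hT.measurable hf n).const_smul (n : ℝ)⁻¹).stronglyMeasurable)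
    stronglyMeasurable_const hlim hγ
  obtain ⟨N, hN⟩ := hunif.exists_forall_abs_window_average_sub_lt hθ hτ
  refine ⟨N, Z, hZ, hμZ, fun M L hM hL hML x hx => ?_⟩
  rw [sum_Icc_comp_iterate_eq_birkhoffSum_sub]
  exact hN M L hM hL hML x hx
end

section
/- Fix i₀ ∈ ℕ and n > i₀ in the quasi-similar Cantor construction, and define x ∼ y for x, y ∈ ∂A_n iff |x − y| is an integer multiple r/(k_1⋯k_{i₀}) with 0 ≤ r ≤ k_1⋯k_{i₀}. Then ∼ is an equivalence relation on ∂A_n, the equivalence class containing 0 has 2·m_1⋯m_{i₀} elements, every other class has m_1⋯m_{i₀} elements, and the number of classes is 2·m_{i₀+1}⋯m_n − 1. -/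
open scoped Classical
open MeasureTheory

/-- The data of a quasi-similar Cantor set construction with parameters `(kᵢ)`, `(mᵢ)`
(indexed from `1`), `2 ≤ mᵢ ≤ ⌊kᵢ/2⌋`.  `ends n` is the (finite) set of left endpoints of
the `m₁⋯mₙ` closed intervals, each of length `1/(k₁⋯kₙ)`, forming the `n`-th stage `Aₙ`
(`ends 0 = {0}`, the interval `[0,1]`).  At each stage every interval is divided into
`k_{n+1}` equal parts of which `m_{n+1}` are selected according to a fixed pattern
`off (n+1)` of offsets (the same configuration in each interval), including the first and
the last subinterval, with pairwise disjoint closures. -/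
structure QSCantor where
  k : ℕ → ℕ
  m : ℕ → ℕ
  ends : ℕ → Finset ℝ
  off : ℕ → Finset ℝ
  two_le_m : ∀ i, 2 ≤ m i
  m_le_half_k : ∀ i, m i ≤ k i / 2
  ends_zero : ends 0 = {0}
  card_off : ∀ n, (off (n + 1)).card = m (n + 1)
  off_zero : ∀ n, (0 : ℝ) ∈ off (n + 1)
  off_last : ∀ n,
    (∏ i ∈ Finset.range n, (k (i + 1) : ℝ))⁻¹ -
      (∏ i ∈ Finset.range (n + 1), (k (i + 1) : ℝ))⁻¹ ∈ off (n + 1)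
  off_mult : ∀ n, ∀ o ∈ off (n + 1), ∃ r : ℕ,
    (r : ℝ) * (∏ i ∈ Finset.range (n + 1), (k (i + 1) : ℝ))⁻¹ = o ∧ r + 1 ≤ k (n + 1)
  off_sep : ∀ n, ∀ o ∈ off (n + 1), ∀ o' ∈ off (n + 1), o ≠ o' →
    2 * (∏ i ∈ Finset.range (n + 1), (k (i + 1) : ℝ))⁻¹ ≤ |o - o'|
  ends_succ : ∀ n, (ends (n + 1) : Set ℝ) =
    {z : ℝ | ∃ b ∈ ends n, ∃ o ∈ off (n + 1), z = b + o}

namespace QSCantor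

/-- Length `1/(k₁⋯kₙ)` of the stage-`n` intervals. -/
noncomputable def len (C : QSCantor) (n : ℕ) : ℝ :=
  (∏ i ∈ Finset.range n, (C.k (i + 1) : ℝ))⁻¹

/-- The product `m₁⋯mₙ`. -/
def prodM (C : QSCantor) (n : ℕ) : ℕ := ∏ i ∈ Finset.range n, C.m (i + 1)

/-- The `n`-th stage `Aₙ` of the construction: a union of `m₁⋯mₙ` closed intervals. -/
noncomputable def stage (C : QSCantor) (n : ℕ) : Set ℝ :=
  ⋃ a ∈ C.ends n, Set.Icc a (a + C.len n)

/-- The quasi-similar Cantor set `𝒞 = ⋂ₙ Aₙ`. -/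
noncomputable def cantorSet (C : QSCantor) : Set ℝ := ⋂ n, C.stage n

/-- The approximating absolutely continuous function `fₙ`: `fₙ(0) = 0`, `fₙ' = 0` off
`Aₙ` and `fₙ' = (k₁⋯kₙ)/(m₁⋯mₙ)` on `Aₙ`; equivalently
`fₙ(x) = (k₁⋯kₙ)/(m₁⋯mₙ) · λ(Aₙ ∩ [0,x])`. -/
noncomputable def fseq (C : QSCantor) (n : ℕ) (x : ℝ) : ℝ :=
  ((∏ i ∈ Finset.range n, (C.k (i + 1) : ℝ)) / (C.prodM n : ℝ)) *
    (volume (C.stage n ∩ Set.Icc 0 x)).toReal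

/-- The associated singular function `f_s = lim fₙ`. -/
noncomputable def fs (C : QSCantor) (x : ℝ) : ℝ :=
  Filter.limUnder Filter.atTop (fun n => C.fseq n x)

end QSCantor

/-!
Write `n = i₀ + j` and `L = len i₀`.  Every stage-`i₀` interval `[e, e + L]` carries the same
pattern `D ⊆ [0, L]` of stage-`n` endpoints, so `∂Aₙ = ends i₀ + D` with unique
representations; `D` contains `0` and `L` and has `2·m_{i₀+1}⋯mₙ` points.  The left endpoints
`e` are multiples of `L`, so `z ∼ w` is equality in the circle `ℝ/Lℤ`, and the class of `e + d`
is `ends i₀ + {d' ∈ D | d' ≡ d}`.  As `D ⊆ [0, L]`, the only identification inside `D` is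
`0 ≡ L`: the class of `0` has `2·m₁⋯m_{i₀}` points, every other class `m₁⋯m_{i₀}`, and there
are `#D - 1` classes.
-/

open scoped Finset Pointwise

namespace Finset

theorem union_image_add_eq_add_pair (s : Finset ℝ) (c : ℝ) :
    s ∪ s.image (· + c) = s + {0, c} := by
  ext x
  simp only [mem_union, mem_image, mem_add, mem_insert, mem_singleton, exists_eq_or_imp,
    add_zero, exists_eq_left]
  aesop

theorem card_image_filter_eq_card_image {α β : Type*} [DecidableEq α] [DecidableEq β]
    (s : Finset α) (f : α → β) :
    #(s.image fun z => s.filter fun w => f w = f z) = #(s.image f) := by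
  rw [show (s.image fun z => s.filter fun w => f w = f z) =
    (s.image f).image (fun c => s.filter fun w => f w = c) by rw [image_image]; rfl]
  refine card_image_of_injOn fun c hc c' _ hcc' => ?_
  obtain ⟨z, hz, rfl⟩ := mem_image.1 hc
  have : z ∈ s.filter fun w => f w = f z := mem_filter.2 ⟨hz, rfl⟩
  exact (mem_filter.1 (hcc' ▸ this : z ∈ s.filter fun w => f w = c')).2

theorem card_add_eq_mul_of_separated {s t : Finset ℝ} {δ : ℝ}
    (hs : (s : Set ℝ).Pairwise fun x y => 2 * δ ≤ |x - y|) (ht : ∀ y ∈ t, 0 ≤ y ∧ y ≤ δ) :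
    #(s + t) = #s * #t := by
  refine card_add_iff.2 fun ⟨x, y⟩ hxy ⟨x', y'⟩ hxy' heq => ?_
  simp only [Set.mem_prod, mem_coe] at hxy hxy' heq
  have hyy' : |y' - y| ≤ δ := abs_sub_le_iff.2 ⟨by linarith [ht y hxy.2, ht y' hxy'.2],
    by linarith [ht y hxy.2, ht y' hxy'.2]⟩
  obtain rfl : x = x' := by
    by_contra hne
    have hsep : 2 * δ ≤ |y' - y| := by
      simpa [show x - x' = y' - y by linarith] using hs hxy.1 hxy'.1 hne
    have : y' - y = 0 := abs_nonpos_iff.1 (by linarith [abs_nonneg (y' - y)])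
    exact hne (by linarith)
  simp only [Prod.mk.injEq, true_and]
  linarith

theorem pairwise_add_of_separated {s t : Finset ℝ} {δ ε : ℝ}
    (hs : (s : Set ℝ).Pairwise fun x y => 2 * δ ≤ |x - y|) (ht : ∀ y ∈ t, 0 ≤ y ∧ y ≤ δ - ε)
    (ht' : (t : Set ℝ).Pairwise fun x y => 2 * ε ≤ |x - y|) :
    ((s + t : Finset ℝ) : Set ℝ).Pairwise fun x y => 2 * ε ≤ |x - y| := by
  rintro _ hz _ hz' hne
  obtain ⟨x, hx, y, hy, rfl⟩ := mem_add.1 hz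
  obtain ⟨x', hx', y', hy', rfl⟩ := mem_add.1 hz'
  by_cases hxx' : x = x'
  · subst hxx'
    rw [add_sub_add_left_eq_sub]
    exact ht' hy hy' fun h => hne (by rw [h])
  · have hsep := hs hx hx' hxx'
    have hyy' : |y - y'| ≤ δ - ε := abs_sub_le_iff.2 ⟨by linarith [ht y hy, ht y' hy'],
      by linarith [ht y hy, ht y' hy']⟩
    have := abs_sub_abs_le_abs_sub (x - x') (y' - y)
    rw [abs_sub_comm y'] at this
    rw [show x + y - (x' + y') = x - x' - (y' - y) by ring]
    linarith [ht y hy]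

theorem filter_add_of_forall_map_eq_zero {G H : Type*} [AddGroup G] [AddGroup H] [DecidableEq G]
    [DecidableEq H] (f : G →+ H) {s : Finset G} (hs : ∀ x ∈ s, f x = 0) (t : Finset G) (c : H) :
    (s + t).filter (fun z => f z = c) = s + t.filter (fun z => f z = c) := by
  ext z
  simp only [mem_filter, mem_add]
  constructor
  · rintro ⟨⟨x, hx, y, hy, rfl⟩, hc⟩
    rw [map_add, hs x hx, zero_add] at hc
    exact ⟨x, hx, y, ⟨hy, hc⟩, rfl⟩
  · rintro ⟨x, hx, y, ⟨hy, hc⟩, rfl⟩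
    rw [map_add, hs x hx, zero_add]
    exact ⟨⟨x, hx, y, hy, rfl⟩, hc⟩

theorem image_add_of_forall_map_eq_zero {G H : Type*} [AddGroup G] [AddGroup H] [DecidableEq G]
    [DecidableEq H] (f : G →+ H) {s : Finset G} (hs : ∀ x ∈ s, f x = 0) (hs' : s.Nonempty)
    (t : Finset G) : (s + t).image f = t.image f := by
  obtain ⟨x₀, hx₀⟩ := hs'
  ext c
  simp only [mem_image, mem_add]
  constructor
  · rintro ⟨_, ⟨x, hx, y, hy, rfl⟩, rfl⟩
    exact ⟨y, hy, by rw [map_add, hs x hx, zero_add]⟩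
  · rintro ⟨y, hy, rfl⟩
    exact ⟨x₀ + y, ⟨x₀, hx₀, y, hy, rfl⟩, by rw [map_add, hs x₀ hx₀, zero_add]⟩

end Finset

namespace AddCircle

theorem coe_eq_coe_iff_exists_int_mul {p x y : ℝ} :
    (x : AddCircle p) = y ↔ ∃ r : ℤ, x - y = r * p := by
  rw [QuotientAddGroup.eq_iff_sub_mem, AddSubgroup.mem_zmultiples_iff]
  simp only [zsmul_eq_mul, eq_comm]

variable {p : ℝ} [Fact (0 < p)] {D : Finset ℝ}

theorem injOn_coe_Ico : Set.InjOn ((↑) : ℝ → AddCircle p) (Set.Ico 0 p) := fun x hx y hy h =>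
  (coe_eq_coe_iff_of_mem_Ico (a := 0) (by rwa [zero_add]) (by rwa [zero_add])).1 h

theorem filter_coe_eq_zero_of_subset_Icc (hD : ∀ d ∈ D, d ∈ Set.Icc 0 p) (h0 : 0 ∈ D)
    (hp : p ∈ D) : D.filter (fun d : ℝ => (d : AddCircle p) = 0) = {0, p} := by
  ext d
  simp only [Finset.mem_filter, Finset.mem_insert, Finset.mem_singleton]
  constructor
  · rintro ⟨hd, hd0⟩
    rcases eq_or_ne d p with rfl | hdp
    · exact Or.inr rfl
    · exact Or.inl <| injOn_coe_Ico ⟨(hD d hd).1, (hD d hd).2.lt_of_ne hdp⟩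
        ⟨le_rfl, Fact.out⟩ hd0
  · rintro (rfl | rfl)
    · exact ⟨h0, rfl⟩
    · exact ⟨hp, coe_period _⟩

theorem filter_coe_eq_coe_of_subset_Icc (hD : ∀ d ∈ D, d ∈ Set.Icc 0 p) {d : ℝ} (hd : d ∈ D)
    (hd0 : (d : AddCircle p) ≠ 0) : D.filter (fun x : ℝ => (x : AddCircle p) = d) = {d} := by
  have mem_Ico : ∀ x ∈ D, (x : AddCircle p) ≠ 0 → x ∈ Set.Ico 0 p := fun x hx hx0 =>
    ⟨(hD x hx).1, (hD x hx).2.lt_of_ne <| by rintro rfl; exact hx0 (coe_period _)⟩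
  ext x
  simp only [Finset.mem_filter, Finset.mem_singleton]
  constructor
  · rintro ⟨hx, hxd⟩
    exact injOn_coe_Ico (mem_Ico x hx (hxd ▸ hd0)) (mem_Ico d hd hd0) hxd
  · rintro rfl
    exact ⟨hd, rfl⟩

theorem card_image_coe_of_subset_Icc (hD : ∀ d ∈ D, d ∈ Set.Icc 0 p) (h0 : 0 ∈ D)
    (hp : p ∈ D) : #(D.image ((↑) : ℝ → AddCircle p)) = #D - 1 := by
  have hp0 : (0 : ℝ) < p := Fact.out
  have h0' : 0 ∈ D.erase p := Finset.mem_erase.2 ⟨hp0.ne, h0⟩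
  rw [← Finset.insert_erase hp, Finset.image_insert, Finset.insert_eq_of_mem
    (Finset.mem_image.2 ⟨0, h0', by rw [coe_period, coe_zero]⟩), Finset.card_insert_of_notMem
    (Finset.notMem_erase p D), Nat.add_sub_cancel]
  have mem_Ico : ∀ x ∈ D.erase p, x ∈ Set.Ico 0 p := fun x hx =>
    ⟨(hD x (Finset.mem_of_mem_erase hx)).1,
      (hD x (Finset.mem_of_mem_erase hx)).2.lt_of_ne (Finset.ne_of_mem_erase hx)⟩
  exact Finset.card_image_of_injOn fun x hx y hy => injOn_coe_Ico (mem_Ico x hx) (mem_Ico y hy)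

end AddCircle

namespace QSCantor

variable (C : QSCantor)

lemma four_le_k (i : ℕ) : 4 ≤ C.k i := by
  have := C.two_le_m i
  have := C.m_le_half_k i
  omega

lemma len_pos (n : ℕ) : 0 < C.len n :=
  inv_pos.2 <| Finset.prod_pos fun i _ => by have := C.four_le_k (i + 1); positivity

lemma len_eq_k_mul_len_succ (n : ℕ) : C.len n = C.k (n + 1) * C.len (n + 1) := by
  have : (C.k (n + 1) : ℝ) ≠ 0 := by have := C.four_le_k (n + 1); positivity
  simp only [len, Finset.prod_range_succ, mul_inv]
  field_simp

lemma len_mem_zmultiples_len_succ (n : ℕ) :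
    C.len n ∈ AddSubgroup.zmultiples (C.len (n + 1)) :=
  AddSubgroup.mem_zmultiples_iff.2 ⟨C.k (n + 1), by rw [C.len_eq_k_mul_len_succ n]; simp⟩

variable {C}

lemma off_mem_Icc {n : ℕ} {o : ℝ} (ho : o ∈ C.off (n + 1)) :
    0 ≤ o ∧ o ≤ C.len n - C.len (n + 1) := by
  obtain ⟨r, hr, hrk⟩ := C.off_mult n o ho
  have hrk : (r : ℝ) + 1 ≤ C.k (n + 1) := by exact_mod_cast hrk
  have hl := C.len_pos (n + 1)
  change (r : ℝ) * C.len (n + 1) = o at hr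
  subst hr
  rw [C.len_eq_k_mul_len_succ n]
  constructor <;> nlinarith

lemma off_mem_zmultiples {n : ℕ} {o : ℝ} (ho : o ∈ C.off (n + 1)) :
    o ∈ AddSubgroup.zmultiples (C.len (n + 1)) := by
  obtain ⟨r, hr, -⟩ := C.off_mult n o ho
  exact AddSubgroup.mem_zmultiples_iff.2 ⟨r, by rw [← hr]; simp [len]⟩

variable (C)

lemma len_sub_len_succ_mem_off (n : ℕ) : C.len n - C.len (n + 1) ∈ C.off (n + 1) :=
  C.off_last n

lemma off_pairwise (n : ℕ) :
    (C.off (n + 1) : Set ℝ).Pairwise fun x y => 2 * C.len (n + 1) ≤ |x - y| :=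
  fun o ho o' ho' hne => C.off_sep n o ho o' ho' hne

lemma ends_succ_eq_add (n : ℕ) : C.ends (n + 1) = C.ends n + C.off (n + 1) := by
  apply Finset.coe_injective
  rw [C.ends_succ n, Finset.coe_add]
  ext z
  simp only [Set.mem_add, Finset.mem_coe, eq_comm]
  rfl

/-- The left endpoints of the stage-`(a + j)` intervals inside the first stage-`a` interval
`[0, len a]`. -/
noncomputable def pattern (a : ℕ) : ℕ → Finset ℝ
  | 0 => {0}
  | j + 1 => pattern a j + C.off (a + j + 1)

lemma ends_add_eq (a j : ℕ) : C.ends (a + j) = C.ends a + C.pattern a j := by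
  induction j with
  | zero => rw [pattern, Finset.singleton_zero, add_zero, add_zero]
  | succ j ih => rw [← add_assoc, C.ends_succ_eq_add, ih, pattern, add_assoc]

lemma pattern_mem_Icc (a j : ℕ) : ∀ t ∈ C.pattern a j, 0 ≤ t ∧ t ≤ C.len a - C.len (a + j) := by
  induction j with
  | zero => simp [pattern]
  | succ j ih =>
    intro t ht
    rw [← add_assoc]
    obtain ⟨s, hs, o, ho, rfl⟩ := Finset.mem_add.1 ht
    have := ih s hs
    have := off_mem_Icc ho
    constructor <;> linarith

lemma pattern_pairwise (a j : ℕ) :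
    (C.pattern a j : Set ℝ).Pairwise fun x y => 2 * C.len (a + j) ≤ |x - y| := by
  induction j with
  | zero => simp [pattern]
  | succ j ih =>
    exact Finset.pairwise_add_of_separated ih (fun o ho => off_mem_Icc ho) (C.off_pairwise _)

lemma card_pattern (a j : ℕ) : #(C.pattern a j) = ∏ i ∈ Finset.Icc (a + 1) (a + j), C.m i := by
  induction j with
  | zero => simp [pattern]
  | succ j ih =>
    rw [pattern, Finset.card_add_eq_mul_of_separated (C.pattern_pairwise a j) fun o ho =>
      ⟨(off_mem_Icc ho).1, by linarith [(off_mem_Icc ho).2, C.len_pos (a + j + 1)]⟩,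
      ih, C.card_off, ← add_assoc, Finset.prod_Icc_succ_top (by omega)]

lemma zero_mem_pattern (a j : ℕ) : 0 ∈ C.pattern a j := by
  induction j with
  | zero => simp [pattern]
  | succ j ih => exact Finset.mem_add.2 ⟨0, ih, 0, C.off_zero _, add_zero 0⟩

lemma len_sub_len_mem_pattern (a j : ℕ) : C.len a - C.len (a + j) ∈ C.pattern a j := by
  induction j with
  | zero => simp [pattern]
  | succ j ih =>
    exact Finset.mem_add.2 ⟨_, ih, _, C.len_sub_len_succ_mem_off _, by rw [← add_assoc]; ring⟩

lemma ends_eq_pattern (n : ℕ) : C.ends n = C.pattern 0 n := by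
  rw [← zero_add n, ends_add_eq, ends_zero, Finset.singleton_zero, zero_add, zero_add]

lemma card_ends (n : ℕ) : #(C.ends n) = C.prodM n := by
  rw [ends_eq_pattern, card_pattern, prodM, zero_add, zero_add,
    ← Finset.Ico_add_one_right_eq_Icc, Finset.prod_Ico_eq_prod_range, add_tsub_cancel_right]
  exact Finset.prod_congr rfl fun i _ => by rw [add_comm]

lemma ends_pairwise (n : ℕ) :
    (C.ends n : Set ℝ).Pairwise fun x y => 2 * C.len n ≤ |x - y| := by
  simpa [← ends_eq_pattern] using C.pattern_pairwise 0 n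

lemma zero_mem_ends (n : ℕ) : 0 ∈ C.ends n := by
  simpa [← ends_eq_pattern] using C.zero_mem_pattern 0 n

lemma ends_mem_zmultiples (n : ℕ) : ∀ e ∈ C.ends n, e ∈ AddSubgroup.zmultiples (C.len n) := by
  induction n with
  | zero => simp [C.ends_zero]
  | succ n ih =>
    intro e he
    rw [ends_succ_eq_add] at he
    obtain ⟨b, hb, o, ho, rfl⟩ := Finset.mem_add.1 he
    exact add_mem (AddSubgroup.zmultiples_le_of_mem (C.len_mem_zmultiples_len_succ n) (ih b hb))
      (off_mem_zmultiples ho)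

noncomputable def boundaryPattern (a j : ℕ) : Finset ℝ :=
  C.pattern a j + {0, C.len (a + j)}

lemma boundary_eq_add (a j : ℕ) :
    C.ends (a + j) ∪ (C.ends (a + j)).image (· + C.len (a + j)) =
      C.ends a + C.boundaryPattern a j := by
  rw [Finset.union_image_add_eq_add_pair, ends_add_eq, boundaryPattern, add_assoc]

lemma boundaryPattern_mem_Icc (a j : ℕ) : ∀ d ∈ C.boundaryPattern a j, d ∈ Set.Icc 0 (C.len a) := by
  intro d hd
  obtain ⟨t, ht, e, he, rfl⟩ := Finset.mem_add.1 hd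
  have := C.pattern_mem_Icc a j t ht
  have := C.len_pos (a + j)
  rcases Finset.mem_insert.1 he with rfl | he
  · constructor <;> linarith
  · rw [Finset.mem_singleton.1 he]; constructor <;> linarith

lemma zero_mem_boundaryPattern (a j : ℕ) : 0 ∈ C.boundaryPattern a j :=
  Finset.mem_add.2 ⟨0, C.zero_mem_pattern a j, 0, by simp, add_zero 0⟩

lemma len_mem_boundaryPattern (a j : ℕ) : C.len a ∈ C.boundaryPattern a j :=
  Finset.mem_add.2 ⟨_, C.len_sub_len_mem_pattern a j, C.len (a + j), by simp, sub_add_cancel _ _⟩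

lemma card_boundaryPattern (a j : ℕ) :
    #(C.boundaryPattern a j) = 2 * ∏ i ∈ Finset.Icc (a + 1) (a + j), C.m i := by
  have hl := C.len_pos (a + j)
  rw [boundaryPattern,
    Finset.card_add_eq_mul_of_separated (C.pattern_pairwise a j) (by simp [hl.le]), card_pattern,
    Finset.card_pair hl.ne, mul_comm]

lemma coe_eq_zero_of_mem_ends {n : ℕ} {e : ℝ} (he : e ∈ C.ends n) :
    (e : AddCircle (C.len n)) = 0 :=
  (QuotientAddGroup.eq_zero_iff e).2 (C.ends_mem_zmultiples n e he)

lemma card_filter_coe_eq_prodM_mul (i₀ j : ℕ) (c : AddCircle (C.len i₀)) :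
    #((C.ends i₀ + C.boundaryPattern i₀ j).filter fun z : ℝ => (z : AddCircle (C.len i₀)) = c) =
      C.prodM i₀ *
        #((C.boundaryPattern i₀ j).filter fun z : ℝ => (z : AddCircle (C.len i₀)) = c) := by
  have h := Finset.filter_add_of_forall_map_eq_zero
    (QuotientAddGroup.mk' _ : ℝ →+ AddCircle (C.len i₀))
    (fun _ he => C.coe_eq_zero_of_mem_ends he) (C.boundaryPattern i₀ j) c
  simp only [QuotientAddGroup.mk'_apply] at h
  rw [← card_ends, ← Finset.card_add_eq_mul_of_separated (C.ends_pairwise i₀) fun d hd =>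
    C.boundaryPattern_mem_Icc i₀ j d (Finset.mem_of_mem_filter d hd)]
  exact congrArg Finset.card h

lemma image_coe_eq (i₀ j : ℕ) :
    (C.ends i₀ + C.boundaryPattern i₀ j).image ((↑) : ℝ → AddCircle (C.len i₀)) =
      (C.boundaryPattern i₀ j).image ((↑) : ℝ → AddCircle (C.len i₀)) :=
  Finset.image_add_of_forall_map_eq_zero (QuotientAddGroup.mk' _ : ℝ →+ AddCircle (C.len i₀))
    (fun _ he => C.coe_eq_zero_of_mem_ends he) ⟨0, C.zero_mem_ends i₀⟩ _

end QSCantor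

theorem stmt13_general (C : QSCantor) (i₀ n : ℕ) (hn : i₀ < n) :
    let bd : Finset ℝ := C.ends n ∪ (C.ends n).image (fun a => a + C.len n)
    let R : ℝ → ℝ → Prop := fun z w => ∃ r : ℤ, z - w = (r : ℝ) * C.len i₀
    (∀ z ∈ bd, R z z) ∧
    (∀ z ∈ bd, ∀ w ∈ bd, R z w → R w z) ∧
    (∀ z ∈ bd, ∀ w ∈ bd, ∀ v ∈ bd, R z w → R w v → R z v) ∧
    (bd.filter (fun w => R w 0)).card = 2 * C.prodM i₀ ∧
    (∀ z ∈ bd, ¬ R z 0 → (bd.filter (fun w => R w z)).card = C.prodM i₀) ∧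
    (bd.image (fun z => bd.filter (fun w => R w z))).card =
      2 * (∏ i ∈ Finset.Icc (i₀ + 1) n, C.m i) - 1 := by
  intro bd R
  obtain ⟨j, rfl⟩ := Nat.exists_eq_add_of_le hn.le
  have : Fact (0 < C.len i₀) := ⟨C.len_pos i₀⟩
  set D := C.boundaryPattern i₀ j
  have hD := C.boundaryPattern_mem_Icc i₀ j
  have hbd : bd = C.ends i₀ + D := C.boundary_eq_add i₀ j
  have hR : ∀ z w, R z w ↔ (z : AddCircle (C.len i₀)) = w := fun z w =>
    AddCircle.coe_eq_coe_iff_exists_int_mul.symm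
  have hclass : ∀ z, bd.filter (fun w => R w z) =
      (C.ends i₀ + D).filter fun w : ℝ => (w : AddCircle (C.len i₀)) = z := fun z => by
    rw [hbd]; exact Finset.filter_congr fun w _ => hR w z
  refine ⟨fun z _ => (hR z z).2 rfl, fun z _ w _ h => (hR w z).2 ((hR z w).1 h).symm,
    fun z _ w _ v _ h h' => (hR z v).2 (((hR z w).1 h).trans ((hR w v).1 h')), ?_, ?_, ?_⟩
  · rw [hclass, C.card_filter_coe_eq_prodM_mul, QuotientAddGroup.mk_zero,
      AddCircle.filter_coe_eq_zero_of_subset_Icc hD (C.zero_mem_boundaryPattern i₀ j)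
        (C.len_mem_boundaryPattern i₀ j), Finset.card_pair (C.len_pos i₀).ne, mul_comm]
  · intro z hz hz0
    rw [hbd] at hz
    obtain ⟨e, he, d, hd, rfl⟩ := Finset.mem_add.1 hz
    have hcoe : ((e + d : ℝ) : AddCircle (C.len i₀)) = d := by
      rw [AddCircle.coe_add, C.coe_eq_zero_of_mem_ends he, zero_add]
    rw [hclass, hcoe, C.card_filter_coe_eq_prodM_mul,
      AddCircle.filter_coe_eq_coe_of_subset_Icc hD hd (hcoe ▸ mt (hR _ 0).2 hz0),
      Finset.card_singleton, mul_one]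
  · rw [Finset.image_congr fun z _ => hclass z, hbd, Finset.card_image_filter_eq_card_image,
      C.image_coe_eq, AddCircle.card_image_coe_of_subset_Icc hD (C.zero_mem_boundaryPattern i₀ j)
        (C.len_mem_boundaryPattern i₀ j), C.card_boundaryPattern]

/-- Fix `1 ≤ i₀ < n`.  On the set `∂Aₙ` of endpoints of the stage-`n` intervals, the
relation `z ∼ w ⇔ z - w ∈ (1/(k₁⋯k_{i₀}))·ℤ` is an equivalence relation; the class of `0`
has `2·m₁⋯m_{i₀}` elements, every other class has `m₁⋯m_{i₀}` elements, and the number of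
classes is `2·m_{i₀+1}⋯mₙ - 1`. -/
theorem stmt13 (C : QSCantor) (i₀ n : ℕ) (h₀ : 1 ≤ i₀) (hn : i₀ < n) :
    let bd : Finset ℝ := C.ends n ∪ (C.ends n).image (fun a => a + C.len n)
    let R : ℝ → ℝ → Prop := fun z w => ∃ r : ℤ, z - w = (r : ℝ) * C.len i₀
    (∀ z ∈ bd, R z z) ∧
    (∀ z ∈ bd, ∀ w ∈ bd, R z w → R w z) ∧
    (∀ z ∈ bd, ∀ w ∈ bd, ∀ v ∈ bd, R z w → R w v → R z v) ∧
    (bd.filter (fun w => R w 0)).card = 2 * C.prodM i₀ ∧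
    (∀ z ∈ bd, ¬ R z 0 → (bd.filter (fun w => R w z)).card = C.prodM i₀) ∧
    (bd.image (fun z => bd.filter (fun w => R w z))).card =
      2 * (∏ i ∈ Finset.Icc (i₀ + 1) n, C.m i) - 1 :=
  stmt13_general C i₀ n hn
end

section
/- Let α be irrational with bounded partial quotients (q_{n+1} ≤ C q_n), x ≠ y ∈ 𝕋, s the unique index with 1/q_{s+1} ≤ ‖x − y‖ < 1/q_s, and β ∈ 𝕋. Then the number of integers t with 0 ≤ t ≤ q_{s+1} − 1 such that β − tα lies in the interval [x, y) is at most 2C + 1. -/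
open scoped Classical

/-!
The fractional parts `f t = {β - tα - x}` of the points in the arc lie in `[0, ‖x - y‖)`,
an interval of length `< 1/q_s = 2C·δ` with `δ = 1/(2C q_s)`. Two of them differ modulo `1`
by `(t' - t)α` with `0 < |t' - t| < q_{s+1}`, so they are at least `δ` apart. Hence the
cells `[kδ, (k+1)δ)`, `0 ≤ k < 2C`, each contain at most one of them.
-/

lemma distToInt_le_abs (z : ℝ) : distToInt z ≤ |z| := by
  simpa [distToInt] using round_le z 0

lemma distToInt_add_intCast (z : ℝ) (n : ℤ) : distToInt (z + n) = distToInt z := by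
  simp only [distToInt, round_add_intCast, Int.cast_add]
  ring_nf

lemma distToInt_fract_sub_fract (a b : ℝ) :
    distToInt (Int.fract a - Int.fract b) = distToInt (a - b) := by
  have h : Int.fract a - Int.fract b = (a - b) + ((⌊b⌋ - ⌊a⌋ : ℤ) : ℝ) := by
    simp only [Int.fract, Int.cast_sub]
    ring
  rw [h, distToInt_add_intCast]

lemma distToInt_mul_le_abs_fract_sub_fract (α γ : ℝ) (t t' : ℤ) :
    distToInt (((t' - t : ℤ) : ℝ) * α) ≤ |Int.fract (γ - t * α) - Int.fract (γ - t' * α)| := by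
  calc distToInt (((t' - t : ℤ) : ℝ) * α)
      = distToInt (Int.fract (γ - t * α) - Int.fract (γ - t' * α)) := by
        rw [distToInt_fract_sub_fract]
        push_cast
        ring_nf
    _ ≤ _ := distToInt_le_abs _

lemma card_le_of_separated_of_mem_Ico {ι : Type*} (S : Finset ι) (f : ι → ℝ) {δ : ℝ}
    (hδ : 0 < δ) (n : ℕ) (hf : ∀ i ∈ S, f i ∈ Set.Ico 0 (n * δ))
    (hsep : ∀ i ∈ S, ∀ j ∈ S, i ≠ j → δ ≤ |f i - f j|) : S.card ≤ n := by
  have hcells : S.card ≤ (Finset.range n).card := by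
    refine Finset.card_le_card_of_injOn (fun i => ⌊f i / δ⌋₊) (fun i hi => ?_) ?_
    · obtain ⟨hf0, hfn⟩ := hf i hi
      rw [Finset.coe_range, Set.mem_Iio, Nat.floor_lt (div_nonneg hf0 hδ.le),
        div_lt_iff₀ hδ]
      exact hfn
    · intro i hi j hj hij
      by_contra hne
      have hcell : |f i / δ - f j / δ| < 1 := by
        have hi0 := div_nonneg (hf i hi).1 hδ.le
        have hj0 := div_nonneg (hf j hj).1 hδ.le
        have hij' : (⌊f i / δ⌋₊ : ℝ) = ⌊f j / δ⌋₊ := congrArg Nat.cast hij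
        rw [abs_lt]
        constructor <;>
          linarith [Nat.floor_le hi0, Nat.lt_floor_add_one (f i / δ),
            Nat.floor_le hj0, Nat.lt_floor_add_one (f j / δ)]
      rw [← sub_div, abs_div, abs_of_pos hδ, div_lt_one hδ] at hcell
      exact (hsep i hi j hj hne).not_gt hcell
  simpa using hcells

theorem stmt19_general (α : ℝ) (C : ℕ) (hC : 0 < C)
    (qs qs1 : ℕ) (hqs : 0 < qs)
    (hspace : ∀ j : ℤ, j ≠ 0 → |j| < (qs1 : ℤ) →
      1 / (2 * (C : ℝ) * (qs : ℝ)) ≤ distToInt ((j : ℝ) * α))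
    (x y β : ℝ)
    (hup : distToInt (x - y) < 1 / (qs : ℝ)) :
    ((Finset.range qs1).filter
        (fun t => Int.fract (β - (t : ℝ) * α - x) < distToInt (x - y))).card ≤
      2 * C + 1 := by
  set δ : ℝ := 1 / (2 * (C : ℝ) * (qs : ℝ))
  set f : ℝ → ℝ := fun t => Int.fract (β - t * α - x)
  have hδ : 0 < δ := by positivity
  have hwidth : ((2 * C : ℕ) : ℝ) * δ = 1 / qs := by
    simp only [δ, Nat.cast_mul, Nat.cast_ofNat]
    field_simp
  have hS : ((Finset.range qs1).filter fun t : ℕ => f t < distToInt (x - y)).card ≤ 2 * C := by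
    refine card_le_of_separated_of_mem_Ico _ (fun t : ℕ => f t) hδ (2 * C)
      (fun t ht => ⟨Int.fract_nonneg _, ?_⟩) (fun t ht t' ht' hne => ?_)
    · rw [hwidth]
      exact (Finset.mem_filter.1 ht).2.trans hup
    · simp only [Finset.mem_filter, Finset.mem_range] at ht ht'
      have hj : ((t' : ℤ) - t : ℤ) ≠ 0 := by omega
      have hjlt : |((t' : ℤ) - t : ℤ)| < qs1 := by rw [abs_lt]; omega
      have hdiff := distToInt_mul_le_abs_fract_sub_fract α (β - x) t t'
      simp only [Int.cast_natCast, sub_right_comm _ x] at hdiff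
      exact (hspace _ hj hjlt).trans (by exact_mod_cast hdiff)
  calc _ ≤ ((Finset.range qs1).filter fun t : ℕ => f t < distToInt (x - y)).card := by
        -- the statement filters `range qs1` pushed into `ℝ` through the `Finset` monad
        rw [bind_pure_comp, Finset.fmap_def, Finset.filter_image]
        exact Finset.card_image_le
    _ ≤ 2 * C + 1 := by omega

/-- Let `α` have bounded partial quotients with constant `C` (`q_{s+1} ≤ C·q_s`) and
`x ≠ y` with `1/q_{s+1} ≤ ‖x - y‖ < 1/q_s`.  Then for any `β`, the number of
`t ∈ {0, …, q_{s+1} - 1}` with `β - tα` in the arc `[x, y)` (of length `‖x - y‖`) is at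
most `2C + 1`. -/
theorem stmt19 (α : ℝ) (hα : Irrational α) (C : ℕ) (hC : 0 < C)
    (qs qs1 : ℕ) (hqs : 0 < qs) (hq : qs1 ≤ C * qs)
    (hspace : ∀ j : ℤ, j ≠ 0 → |j| < (qs1 : ℤ) →
      1 / (2 * (C : ℝ) * (qs : ℝ)) ≤ distToInt ((j : ℝ) * α))
    (x y β : ℝ)
    (hlow : 1 / (qs1 : ℝ) ≤ distToInt (x - y)) (hup : distToInt (x - y) < 1 / (qs : ℝ)) :
    ((Finset.range qs1).filter
        (fun t => Int.fract (β - (t : ℝ) * α - x) < distToInt (x - y))).card ≤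
      2 * C + 1 :=
  stmt19_general α C hC qs qs1 hqs hspace x y β hup
end
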